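/- arXiv:2303.01745 — 13 statements merged into one kernel-verified Lean document; each statement's English description precedes it below -/
import Mathlib

section
/- Let n ≥ 1 and let x_1, …, x_n be nonnegative real numbers with x_1 = 0 and |x_{i+1} − x_i| ≤ 1 for all 1 ≤ i < n. Let S = Σ_{i=1}^n x_i. Then Σ_{i=1}^n x_i² ≤ 4·S^{3/2}. -/
/-- If `x_1, …, x_n` are nonnegative reals with `x_1 = 0` and increments
bounded by `1`, and `S = Σ x_i`, then `Σ x_i² ≤ 4 · S^(3/2)`. -/
theorem sum_sq_le_four_mul_sum_rpow (n : ℕ) (hn : 1 ≤ n) (x : ℕ → ℝ)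
    (hx1 : x 1 = 0)
    (hnonneg : ∀ i ∈ Finset.Icc 1 n, 0 ≤ x i)
    (hdiff : ∀ i, 1 ≤ i → i < n → |x (i + 1) - x i| ≤ 1) :
    ∑ i ∈ Finset.Icc 1 n, (x i) ^ 2 ≤
      4 * (∑ i ∈ Finset.Icc 1 n, x i) ^ ((3 : ℝ) / 2) := by
  set S := ∑ i ∈ Finset.Icc 1 n, x i with hSdef
  have hS0 : 0 ≤ S := Finset.sum_nonneg hnonneg
  have key : ∀ i, 1 ≤ i → i ≤ n → (x i) ^ 2 ≤ 2 * ∑ j ∈ Finset.Icc 1 i, x j := by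
    intro i
    induction i with
    | zero => omega
    | succ k ih =>
      intro _ hin
      rcases Nat.eq_zero_or_pos k with hk0 | hk1
      · subst hk0
        simp [hx1]
      · have hkn : k ≤ n := by omega
        have hT := ih hk1 hkn
        have hsum : ∑ j ∈ Finset.Icc 1 (k + 1), x j
            = (∑ j ∈ Finset.Icc 1 k, x j) + x (k + 1) :=
          Finset.sum_Icc_succ_top (by omega) x
        have hTnn : 0 ≤ ∑ j ∈ Finset.Icc 1 k, x j := by
          apply Finset.sum_nonneg
          intro j hj
          exact hnonneg j (Finset.mem_Icc.mpr ⟨(Finset.mem_Icc.mp hj).1, le_trans (Finset.mem_Icc.mp hj).2 hkn⟩)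
        have ha : 0 ≤ x k := hnonneg k (Finset.mem_Icc.mpr ⟨hk1, hkn⟩)
        have hb : 0 ≤ x (k + 1) := hnonneg (k + 1) (Finset.mem_Icc.mpr ⟨by omega, hin⟩)
        have hd := hdiff k hk1 (by omega)
        rw [abs_le] at hd
        rw [hsum]
        rcases le_or_gt (x (k + 1)) 1 with hc | hc
        · nlinarith
        · nlinarith [sq_nonneg (x (k + 1) - 1 - x k)]
  have hbound : ∀ i ∈ Finset.Icc 1 n, (x i) ^ 2 ≤ x i * Real.sqrt (2 * S) := by
    intro i hi
    obtain ⟨h1, h2⟩ := Finset.mem_Icc.mp hi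
    have hsub : (x i) ^ 2 ≤ 2 * S := by
      refine le_trans (key i h1 h2) ?_
      have : ∑ j ∈ Finset.Icc 1 i, x j ≤ S := by
        apply Finset.sum_le_sum_of_subset_of_nonneg
        · exact Finset.Icc_subset_Icc_right h2
        · intro j hj _; exact hnonneg j hj
      linarith
    have hxi : 0 ≤ x i := hnonneg i hi
    have hxle : x i ≤ Real.sqrt (2 * S) := by
      rw [← Real.sqrt_sq hxi]
      exact Real.sqrt_le_sqrt hsub
    calc (x i) ^ 2 = x i * x i := sq (x i)
    _ ≤ x i * Real.sqrt (2 * S) := by nlinarith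
  have hsum2 : ∑ i ∈ Finset.Icc 1 n, (x i) ^ 2 ≤ S * Real.sqrt (2 * S) := by
    calc ∑ i ∈ Finset.Icc 1 n, (x i) ^ 2 ≤ ∑ i ∈ Finset.Icc 1 n, x i * Real.sqrt (2 * S) :=
          Finset.sum_le_sum hbound
      _ = S * Real.sqrt (2 * S) := by rw [← Finset.sum_mul]
  refine le_trans hsum2 ?_
  rcases eq_or_lt_of_le hS0 with hS | hS
  · rw [← hS]
    simp
  · have h32 : S ^ ((3 : ℝ) / 2) = S * Real.sqrt S := by
      rw [show (3 : ℝ) / 2 = 1 + 1/2 by norm_num, Real.rpow_add hS,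
        Real.rpow_one, Real.sqrt_eq_rpow]
    rw [h32]
    have : Real.sqrt (2 * S) = Real.sqrt 2 * Real.sqrt S := Real.sqrt_mul (by norm_num) S
    rw [this]
    have h2 : Real.sqrt 2 ≤ 4 := by
      nlinarith [Real.sq_sqrt (by norm_num : (2:ℝ) ≥ 0), Real.sqrt_nonneg 2]
    have hs : 0 ≤ Real.sqrt S := Real.sqrt_nonneg S
    nlinarith [mul_nonneg hS0 hs]
end

section
/- Let n ≥ 1 and let x_1, …, x_n be nonnegative real numbers with x_1 = 0 and |x_{i+1} − x_i| ≤ 1 for all 1 ≤ i < n. Let y_1 ≤ y_2 ≤ … ≤ y_n be the nondecreasing rearrangement of x_1, …, x_n, i.e., y_i = x_{σ(i)} for some permutation σ of {1,…,n} and y is nondecreasing. Then y_{i+1} − y_i ≤ 1 for all 1 ≤ i < n. -/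
/-- The nondecreasing rearrangement of a nonnegative sequence starting at `0`
with increments bounded by `1` also has increments bounded by `1`. -/
theorem sorted_rearrangement_bounded_increments (n : ℕ) (hn : 0 < n)
    (x y : Fin n → ℝ) (σ : Equiv.Perm (Fin n))
    (hx1 : x ⟨0, hn⟩ = 0)
    (hnonneg : ∀ i, 0 ≤ x i)
    (hdiff : ∀ (i : ℕ) (hi : i + 1 < n),
      |x ⟨i + 1, hi⟩ - x ⟨i, Nat.lt_of_succ_lt hi⟩| ≤ 1)
    (hy : ∀ i, y i = x (σ i))
    (hmono : Monotone y) :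
    ∀ (i : ℕ) (hi : i + 1 < n),
      y ⟨i + 1, hi⟩ - y ⟨i, Nat.lt_of_succ_lt hi⟩ ≤ 1 := by
  intro i hi
  by_contra hcon
  push_neg at hcon
  set c := y ⟨i, Nat.lt_of_succ_lt hi⟩ with hc
  have hc0 : 0 ≤ c := by rw [hc, hy]; exact hnonneg _
  have hgt : c + 1 < y ⟨i + 1, hi⟩ := by linarith
  have hA : ∀ j : Fin n, x j ≤ c ∨ c + 1 < x j := by
    intro j
    have hxj : x j = y (σ.symm j) := by rw [hy, Equiv.apply_symm_apply]
    rcases le_or_gt (σ.symm j) ⟨i, Nat.lt_of_succ_lt hi⟩ with hle | hlt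
    · left; rw [hxj]; exact hmono hle
    · right; rw [hxj]
      have hle2 : (⟨i + 1, hi⟩ : Fin n) ≤ σ.symm j := hlt
      exact lt_of_lt_of_le hgt (hmono hle2)
  have hall : ∀ j (hj : j < n), x ⟨j, hj⟩ ≤ c := by
    intro j
    induction j with
    | zero =>
      intro hj
      have h0 : x ⟨0, hj⟩ = 0 := hx1
      linarith
    | succ j ih =>
      intro hj
      have h2 := ih (Nat.lt_of_succ_lt hj)
      have h1 := (abs_le.mp (hdiff j hj)).2
      rcases hA ⟨j + 1, hj⟩ with h | h
      · exact h
      · linarith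
  have hfin : x (σ ⟨i + 1, hi⟩) ≤ c := by
    have := hall (σ ⟨i + 1, hi⟩).val (σ ⟨i + 1, hi⟩).isLt
    simpa using this
  rw [← hy] at hfin
  linarith
end

section
/- Let K ≥ 1 and T ≥ 1. Let η_1 ≥ η_2 ≥ … ≥ η_T > 0 and 1/K ≥ β_1 ≥ β_2 ≥ … ≥ β_T > 0 be real numbers. For each 1 ≤ t ≤ T let g̃_t ∈ ℝ_{≥0}^K and θ_t ∈ Δ^{[K],β_t}. Let x_1 ∈ Δ^{[K],β_1}, and for 1 ≤ t ≤ T define recursively: z_t is a minimizer over x' ∈ Δ^{[K],β_t} of ⟨−η_t g̃_t, x'⟩ + D_Ψ(x', x_t); x_{t+1} = z_t; and z̃_t ∈ ℝ_{>0}^K is given by (z̃_t)_i = x_{t,i}·exp(η_t g̃_{t,i}). Then Σ_{t=1}^T ⟨g̃_t, θ_t − x_t⟩ ≤ (1 + Σ_{t=1}^{T−1} ‖θ_{t+1} − θ_t‖₁)·η_T^{−1}·ln(1/β_T) − η_T^{−1}·D_Ψ(θ_T, z_T) + Σ_{t=1}^T η_t^{−1}·D_Ψ(x_t, z̃_t).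 -/
/-- The Bregman divergence induced by the unnormalized negative entropy
`Ψ(x) = Σᵢ (xᵢ ln xᵢ − xᵢ)`, i.e. `D_Ψ(y, x) = Σᵢ (yᵢ ln(yᵢ/xᵢ) − yᵢ + xᵢ)`. -/
noncomputable def DPsi {K : ℕ} (y x : Fin K → ℝ) : ℝ :=
  ∑ i, (y i * Real.log (y i / x i) - y i + x i)

/-- The `β`-truncated probability simplex `Δ^{[K],β}`. -/
def simplexB (K : ℕ) (β : ℝ) : Set (Fin K → ℝ) :=
  {x | (∀ i, β ≤ x i) ∧ ∑ i, x i = 1}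



/-- entrywise Bregman term is nonneg -/
lemma breg1_nonneg {y x : ℝ} (hy : 0 ≤ y) (hx : 0 < x) :
    0 ≤ y * Real.log (y / x) - y + x := by
  rcases eq_or_lt_of_le hy with h | h
  · simp [← h]; positivity
  · have h1 : Real.log (x / y) ≤ x / y - 1 := Real.log_le_sub_one_of_pos (by positivity)
    have h2 : Real.log (x / y) = Real.log x - Real.log y := Real.log_div hx.ne' h.ne'
    have h3 : Real.log (y / x) = Real.log y - Real.log x := Real.log_div h.ne' hx.ne'
    have h4 : x / y - 1 = (x - y) / y := by field_simp
    rw [h3]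
    have : Real.log y - Real.log x ≥ 1 - x / y := by rw [h2] at h1; nlinarith [h1]
    have h5 : y * (Real.log y - Real.log x) ≥ y * (1 - x / y) := by nlinarith
    have h6 : y * (1 - x / y) = y - x := by field_simp
    nlinarith

lemma breg1_le_sq {y x : ℝ} (hy : 0 ≤ y) (hx : 0 < x) :
    y * Real.log (y / x) - y + x ≤ (y - x) ^ 2 / x := by
  rcases eq_or_lt_of_le hy with h | h
  · rw [← h]; simp; rw [pow_two, mul_div_assoc, div_self hx.ne', mul_one]
  · have h1 : Real.log (y / x) ≤ y / x - 1 := Real.log_le_sub_one_of_pos (by positivity)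
    have h2 : y * Real.log (y / x) ≤ y * (y / x - 1) := by nlinarith
    have h3 : y * (y / x - 1) - y + x = (y - x) ^ 2 / x := by field_simp; ring
    linarith

lemma DPsi_nonneg {K : ℕ} {y x : Fin K → ℝ} (hy : ∀ i, 0 ≤ y i) (hx : ∀ i, 0 < x i) :
    0 ≤ DPsi y x :=
  Finset.sum_nonneg fun i _ => breg1_nonneg (hy i) (hx i)

lemma simplexB_facts {K : ℕ} {b : ℝ} {v : Fin K → ℝ} (hb : 0 < b) (hv : v ∈ simplexB K b) :
    (∀ i, b ≤ v i) ∧ (∀ i, v i ≤ 1) ∧ ∑ i, v i = 1 := by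
  obtain ⟨h1, h2⟩ := hv
  refine ⟨h1, fun i => ?_, h2⟩
  calc v i ≤ ∑ j, v j := Finset.single_le_sum (fun j _ => le_trans hb.le (h1 j)) (Finset.mem_univ i)
    _ = 1 := h2

/-- Generalized-Pythagorean consequence of value-minimality over the truncated simplex. -/
lemma bregman_min_le {K : ℕ} {b : ℝ} (hb : 0 < b) {xt zt zt' u : Fin K → ℝ}
    (hxt : ∀ i, 0 < xt i) {ℓ : Fin K → ℝ}
    (hz : zt ∈ simplexB K b) (hu : u ∈ simplexB K b)
    (hzt' : ∀ i, zt' i = xt i * Real.exp (ℓ i))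
    (hmin : ∀ x' ∈ simplexB K b, (∑ i, -(ℓ i) * zt i) + DPsi zt xt ≤
        (∑ i, -(ℓ i) * x' i) + DPsi x' xt) :
    DPsi u zt ≤ DPsi u zt' := by
  have hzpos : ∀ i, 0 < zt i := fun i => lt_of_lt_of_le hb (hz.1 i)
  have hupos : ∀ i, 0 < u i := fun i => lt_of_lt_of_le hb (hu.1 i)
  have hzt'pos : ∀ i, 0 < zt' i := fun i => by rw [hzt' i]; exact mul_pos (hxt i) (Real.exp_pos _)
  set c : Fin K → ℝ := fun i => Real.log (zt i) - Real.log (xt i) - ℓ i with hc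
  -- key identity : F v - F zt = ⟨c, v - zt⟩ + DPsi v zt  for positive v
  have key : ∀ v : Fin K → ℝ, (∀ i, 0 < v i) →
      ((∑ i, -(ℓ i) * v i) + DPsi v xt) - ((∑ i, -(ℓ i) * zt i) + DPsi zt xt)
        = (∑ i, c i * (v i - zt i)) + DPsi v zt := by
    intro v hv
    unfold DPsi
    rw [← Finset.sum_add_distrib, ← Finset.sum_add_distrib, ← Finset.sum_sub_distrib,
      ← Finset.sum_add_distrib]
    refine Finset.sum_congr rfl fun i _ => ?_
    rw [Real.log_div (hv i).ne' (hxt i).ne', Real.log_div (hzpos i).ne' (hxt i).ne',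
      Real.log_div (hv i).ne' (hzpos i).ne']
    ring
  set s := ∑ i, c i * (u i - zt i) with hs
  set C := ∑ i, (u i - zt i) ^ 2 / zt i with hC
  have hCnn : 0 ≤ C := Finset.sum_nonneg fun i _ => div_nonneg (sq_nonneg _) (hzpos i).le
  have claim : ∀ lam : ℝ, 0 < lam → lam ≤ 1 → 0 ≤ lam * s + lam ^ 2 * C := by
    intro lam h0 h1
    set w : Fin K → ℝ := fun i => zt i + lam * (u i - zt i) with hw
    have hwmem : w ∈ simplexB K b := by
      constructor
      · intro i
        have := hz.1 i; have := hu.1 i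
        simp only [hw]; nlinarith
      · have : ∑ i, w i = ∑ i, zt i + lam * (∑ i, u i - ∑ i, zt i) := by
          simp only [hw, Finset.sum_add_distrib, ← Finset.mul_sum, Finset.sum_sub_distrib]
        rw [this, hz.2, hu.2]; ring
    have hwpos : ∀ i, 0 < w i := fun i => lt_of_lt_of_le hb (hwmem.1 i)
    have h2 := hmin w hwmem
    have h3 := key w hwpos
    have h4 : (∑ i, c i * (w i - zt i)) = lam * s := by
      rw [hs, Finset.mul_sum]
      refine Finset.sum_congr rfl fun i _ => ?_
      simp only [hw]; ring
    have h5 : DPsi w zt ≤ lam ^ 2 * C := by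
      unfold DPsi
      rw [hC, Finset.mul_sum]
      refine Finset.sum_le_sum fun i _ => ?_
      have := breg1_le_sq (hwpos i).le (hzpos i)
      have he : (w i - zt i) ^ 2 / zt i = lam ^ 2 * ((u i - zt i) ^ 2 / zt i) := by
        simp only [hw]; ring
      linarith [he ▸ this]
    nlinarith [h2, h3, h4, h5]
  have hsnn : 0 ≤ s := by
    by_contra h
    push_neg at h
    set lam := min 1 (-s / (2 * (C + 1))) with hlam
    have hlam0 : 0 < lam := lt_min one_pos (div_pos (neg_pos.2 h) (by nlinarith))
    have hlam1 : lam ≤ 1 := min_le_left _ _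
    have h6 := claim lam hlam0 hlam1
    have h7 : lam * C ≤ (-s / (2 * (C + 1))) * C :=
      mul_le_mul_of_nonneg_right (min_le_right _ _) hCnn
    have h8 : (-s / (2 * (C + 1))) * C ≤ -s / 2 := by
      rw [div_mul_eq_mul_div, div_le_div_iff₀ (by positivity) (by norm_num)]
      nlinarith
    nlinarith [mul_le_mul_of_nonneg_right (mul_le_one₀ hlam1 hlam0.le hlam1) hCnn,
      mul_pos hlam0 (neg_pos.2 h), sq_nonneg lam]
  -- final identity : DPsi u zt' - DPsi u zt = DPsi zt zt' + s
  have fin : DPsi u zt' - DPsi u zt = DPsi zt zt' + s := by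
    unfold DPsi
    rw [hs, ← Finset.sum_sub_distrib, ← Finset.sum_add_distrib]
    refine Finset.sum_congr rfl fun i _ => ?_
    have hl : Real.log (zt' i) = Real.log (xt i) + ℓ i := by
      rw [hzt' i, Real.log_mul (hxt i).ne' (Real.exp_ne_zero _), Real.log_exp]
    rw [Real.log_div (hupos i).ne' (hzt'pos i).ne', Real.log_div (hupos i).ne' (hzpos i).ne',
      Real.log_div (hzpos i).ne' (hzt'pos i).ne', hl, hc]
    ring
  have hD := Finset.sum_nonneg (fun i (_ : i ∈ Finset.univ) =>
    breg1_nonneg (hzpos i).le (hzt'pos i))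
  have : 0 ≤ DPsi zt zt' := hD
  linarith [fin, this, hsnn]

/-- sample-path dynamic regret bound for the EXP3.S+ mirror-descent
iterates (Lemma on `EXP3.S+` sample paths). -/
theorem exp3s_sample_path_regret (K T : ℕ) (hK : 1 ≤ K) (hT : 1 ≤ T)
    (η β : ℕ → ℝ)
    (hηpos : ∀ t ∈ Finset.Icc 1 T, 0 < η t)
    (hηmono : ∀ s t : ℕ, 1 ≤ s → s ≤ t → t ≤ T → η t ≤ η s)
    (hβpos : ∀ t ∈ Finset.Icc 1 T, 0 < β t)
    (hβK : β 1 ≤ 1 / (K : ℝ))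
    (hβmono : ∀ s t : ℕ, 1 ≤ s → s ≤ t → t ≤ T → β t ≤ β s)
    (g θ x z ztilde : ℕ → Fin K → ℝ)
    (hg : ∀ t ∈ Finset.Icc 1 T, ∀ i, 0 ≤ g t i)
    (hθ : ∀ t ∈ Finset.Icc 1 T, θ t ∈ simplexB K (β t))
    (hx1 : x 1 ∈ simplexB K (β 1))
    (hzmem : ∀ t ∈ Finset.Icc 1 T, z t ∈ simplexB K (β t))
    (hzmin : ∀ t ∈ Finset.Icc 1 T, ∀ x' ∈ simplexB K (β t),
      (∑ i, -(η t * g t i) * z t i) + DPsi (z t) (x t) ≤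
        (∑ i, -(η t * g t i) * x' i) + DPsi x' (x t))
    (hxrec : ∀ t ∈ Finset.Icc 1 T, x (t + 1) = z t)
    (hztilde : ∀ t ∈ Finset.Icc 1 T, ∀ i, ztilde t i = x t i * Real.exp (η t * g t i)) :
    ∑ t ∈ Finset.Icc 1 T, ∑ i, g t i * (θ t i - x t i) ≤
      (1 + ∑ t ∈ Finset.Icc 1 (T - 1), ∑ i, |θ (t + 1) i - θ t i|) * (η T)⁻¹ *
          Real.log (1 / β T)
        - (η T)⁻¹ * DPsi (θ T) (z T)
        + ∑ t ∈ Finset.Icc 1 T, (η t)⁻¹ * DPsi (x t) (ztilde t) := by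
  have hmem : ∀ t, 1 ≤ t → t ≤ T → t ∈ Finset.Icc 1 T := by
    intro t h1 h2; simp [Finset.mem_Icc]; omega
  have hTmem : T ∈ Finset.Icc 1 T := hmem T hT le_rfl
  have h1mem : (1 : ℕ) ∈ Finset.Icc 1 T := hmem 1 le_rfl hT
  have hβ1 : 0 < β 1 := hβpos 1 h1mem
  have hβT : 0 < β T := hβpos T hTmem
  have hβTle1 : β T ≤ 1 := by
    have h1 : β T ≤ β 1 := hβmono 1 T le_rfl hT le_rfl
    have h2 : (1 : ℝ) / K ≤ 1 := by
      rw [div_le_one (by exact_mod_cast Nat.pos_of_ne_zero (by omega))]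
      exact_mod_cast hK
    linarith
  set L := Real.log (1 / β T) with hLdef
  have hLeq : L = -Real.log (β T) := by rw [hLdef, one_div, Real.log_inv]
  have hL0 : 0 ≤ L := by
    rw [hLeq]
    exact neg_nonneg.2 (Real.log_nonpos hβT.le hβTle1)
  -- iterate membership facts
  have hxfacts : ∀ t, 1 ≤ t → t ≤ T + 1 →
      (∀ i, β T ≤ x t i) ∧ (∀ i, x t i ≤ 1) ∧ (∑ i, x t i = 1) := by
    intro t h1 h2
    rcases Nat.lt_or_ge t 2 with h | h
    · have ht1 : t = 1 := by omega
      subst ht1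
      obtain ⟨a, b, c⟩ := simplexB_facts hβ1 hx1
      exact ⟨fun i => le_trans (hβmono 1 T le_rfl hT le_rfl) (a i), b, c⟩
    · obtain ⟨m, rfl⟩ : ∃ m, t = m + 1 := ⟨t - 1, by omega⟩
      have hmmem : m ∈ Finset.Icc 1 T := hmem m (by omega) (by omega)
      rw [hxrec m hmmem]
      obtain ⟨a, b, c⟩ := simplexB_facts (hβpos m hmmem) (hzmem m hmmem)
      exact ⟨fun i => le_trans (hβmono m T (by omega) (by omega) le_rfl) (a i), b, c⟩
  have hxpos : ∀ t, 1 ≤ t → t ≤ T + 1 → ∀ i, 0 < x t i := by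
    intro t h1 h2 i; exact lt_of_lt_of_le hβT ((hxfacts t h1 h2).1 i)
  have hlog : ∀ t, 1 ≤ t → t ≤ T + 1 → ∀ i,
      -L ≤ Real.log (x t i) ∧ Real.log (x t i) ≤ 0 := by
    intro t h1 h2 i
    obtain ⟨a, b, _⟩ := hxfacts t h1 h2
    constructor
    · rw [hLeq, neg_neg]; exact Real.log_le_log hβT (a i)
    · exact Real.log_nonpos (hxpos t h1 h2 i).le (b i)
  have hdotlb : ∀ t, 1 ≤ t → t ≤ T + 1 → ∀ v : Fin K → ℝ, (∀ i, 0 ≤ v i) →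
      (∑ i, v i = 1) → -L ≤ ∑ i, v i * Real.log (x t i) := by
    intro t h1 h2 v hv hs
    have : ∑ i, v i * (-L) ≤ ∑ i, v i * Real.log (x t i) :=
      Finset.sum_le_sum fun i _ =>
        mul_le_mul_of_nonneg_left ((hlog t h1 h2 i).1) (hv i)
    calc -L = ∑ i, v i * (-L) := by rw [← Finset.sum_mul, hs, one_mul]
      _ ≤ _ := this
  have habs : ∀ t, 1 ≤ t → t ≤ T + 1 → ∀ v : Fin K → ℝ,
      ∑ i, v i * Real.log (x t i) ≤ (∑ i, |v i|) * L := by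
    intro t h1 h2 v
    rw [Finset.sum_mul]
    refine Finset.sum_le_sum fun i _ => ?_
    have h3 := hlog t h1 h2 i
    calc v i * Real.log (x t i) ≤ |v i * Real.log (x t i)| := le_abs_self _
      _ = |v i| * |Real.log (x t i)| := abs_mul _ _
      _ ≤ |v i| * L := by
          refine mul_le_mul_of_nonneg_left ?_ (abs_nonneg _)
          rw [abs_le]; constructor <;> [linarith [h3.2]; linarith [h3.1]]
  -- per-step inequality
  have step : ∀ t ∈ Finset.Icc 1 T, ∑ i, g t i * (θ t i - x t i) ≤
      (η t)⁻¹ * (∑ i, θ t i * (Real.log (x (t + 1) i) - Real.log (x t i)))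
        + (η t)⁻¹ * DPsi (x t) (ztilde t) := by
    intro t ht
    have ht1 : 1 ≤ t := (Finset.mem_Icc.1 ht).1
    have ht2 : t ≤ T := (Finset.mem_Icc.1 ht).2
    have hηt : 0 < η t := hηpos t ht
    have hxt : ∀ i, 0 < x t i := hxpos t ht1 (by omega)
    have hθt := simplexB_facts (hβpos t ht) (hθ t ht)
    have hθpos : ∀ i, 0 < θ t i := fun i => lt_of_lt_of_le (hβpos t ht) (hθt.1 i)
    have hzt := simplexB_facts (hβpos t ht) (hzmem t ht)
    have hztpos : ∀ i, 0 < z t i := fun i => lt_of_lt_of_le (hβpos t ht) (hzt.1 i)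
    have hztilpos : ∀ i, 0 < ztilde t i := fun i => by
      rw [hztilde t ht i]; exact mul_pos (hxt i) (Real.exp_pos _)
    -- identity A
    have idA : η t * (∑ i, g t i * (θ t i - x t i)) =
        DPsi (θ t) (x t) - DPsi (θ t) (ztilde t) + DPsi (x t) (ztilde t) := by
      unfold DPsi
      rw [Finset.mul_sum, ← Finset.sum_sub_distrib, ← Finset.sum_add_distrib]
      refine Finset.sum_congr rfl fun i _ => ?_
      rw [Real.log_div (hθpos i).ne' (hxt i).ne',
        Real.log_div (hθpos i).ne' (hztilpos i).ne',
        Real.log_div (hxt i).ne' (hztilpos i).ne',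
        hztilde t ht i,
        Real.log_mul (hxt i).ne' (Real.exp_ne_zero _), Real.log_exp]
      ring
    -- pythagorean
    have pyth : DPsi (θ t) (z t) ≤ DPsi (θ t) (ztilde t) :=
      bregman_min_le (hβpos t ht) hxt (hzmem t ht) (hθ t ht)
        (hztilde t ht) (hzmin t ht)
    -- telescoping identity
    have idB : DPsi (θ t) (x t) - DPsi (θ t) (z t) =
        ∑ i, θ t i * (Real.log (z t i) - Real.log (x t i)) := by
      unfold DPsi
      rw [← Finset.sum_sub_distrib]
      have he : ∀ i ∈ Finset.univ, (θ t i * Real.log (θ t i / x t i) - θ t i + x t i)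
          - (θ t i * Real.log (θ t i / z t i) - θ t i + z t i) =
          θ t i * (Real.log (z t i) - Real.log (x t i)) + (x t i - z t i) := by
        intro i _
        rw [Real.log_div (hθpos i).ne' (hxt i).ne',
          Real.log_div (hθpos i).ne' (hztpos i).ne']
        ring
      rw [Finset.sum_congr rfl he, Finset.sum_add_distrib, Finset.sum_sub_distrib,
        (hxfacts t ht1 (by omega)).2.2, hzt.2.2]
      ring
    have h5 : η t * (∑ i, g t i * (θ t i - x t i)) ≤
        (∑ i, θ t i * (Real.log (z t i) - Real.log (x t i))) + DPsi (x t) (ztilde t) := by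
      linarith [idA, pyth, idB]
    rw [hxrec t ht]
    have h6 := mul_le_mul_of_nonneg_left h5 (inv_nonneg.2 hηt.le)
    rwa [inv_mul_cancel_left₀ hηt.ne', mul_add] at h6
  -- the main inductive bound
  have main : ∀ n, 1 ≤ n → n ≤ T →
      ∑ t ∈ Finset.Icc 1 n, ∑ i, g t i * (θ t i - x t i) ≤
        (η n)⁻¹ * L * (1 + ∑ t ∈ Finset.Icc 1 (n - 1), ∑ i, |θ (t + 1) i - θ t i|)
          + (η n)⁻¹ * (∑ i, θ n i * Real.log (x (n + 1) i))
          + ∑ t ∈ Finset.Icc 1 n, (η t)⁻¹ * DPsi (x t) (ztilde t) := by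
    intro n hn
    induction n, hn using Nat.le_induction with
    | base =>
      intro h1T
      have hη1 : 0 < η 1 := hηpos 1 h1mem
      have hθ1 := simplexB_facts hβ1 (hθ 1 h1mem)
      have hθ1nn : ∀ i, 0 ≤ θ 1 i := fun i => le_trans hβ1.le (hθ1.1 i)
      have hs := step 1 h1mem
      have hsplit : (∑ i, θ 1 i * (Real.log (x 2 i) - Real.log (x 1 i)))
          = (∑ i, θ 1 i * Real.log (x 2 i)) - ∑ i, θ 1 i * Real.log (x 1 i) := by
        rw [← Finset.sum_sub_distrib]
        exact Finset.sum_congr rfl fun i _ => by ring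
      have hlb := hdotlb 1 le_rfl (by omega) (θ 1) hθ1nn hθ1.2.2
      have hinv1 : (0:ℝ) ≤ (η 1)⁻¹ := inv_nonneg.2 hη1.le
      simp only [Finset.Icc_self, Finset.sum_singleton, Nat.sub_self,
        Finset.Icc_eq_empty_of_lt (by omega : (1:ℕ) > 0), Finset.sum_empty] at *
      have key : (η 1)⁻¹ * (∑ i, θ 1 i * (Real.log (x 2 i) - Real.log (x 1 i)))
          ≤ (η 1)⁻¹ * L * (1 + 0) + (η 1)⁻¹ * (∑ i, θ 1 i * Real.log (x 2 i)) := by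
        rw [hsplit]
        have h7 : -(∑ i, θ 1 i * Real.log (x 1 i)) ≤ L := by linarith
        nlinarith [mul_le_mul_of_nonneg_left h7 hinv1]
      linarith [hs, key]
    | succ n hn ih =>
      intro hnT
      have hnT' : n ≤ T := by omega
      have ih' := ih hnT'
      have hnmem : n ∈ Finset.Icc 1 T := hmem n hn hnT'
      have hn1mem : n + 1 ∈ Finset.Icc 1 T := hmem (n+1) (by omega) hnT
      have hηn : 0 < η n := hηpos n hnmem
      have hηn1 : 0 < η (n+1) := hηpos (n+1) hn1mem
      have hinvmono : (η n)⁻¹ ≤ (η (n+1))⁻¹ :=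
        one_div (η n) ▸ one_div (η (n+1)) ▸
          one_div_le_one_div_of_le hηn1 (hηmono n (n+1) hn (by omega) hnT)
      have hθn := simplexB_facts (hβpos n hnmem) (hθ n hnmem)
      have hθnnn : ∀ i, 0 ≤ θ n i := fun i => le_trans (hβpos n hnmem).le (hθn.1 i)
      -- split sums
      rw [Finset.sum_Icc_succ_top (by omega : 1 ≤ n + 1)]
      rw [Finset.sum_Icc_succ_top (by omega : 1 ≤ n + 1)
        (f := fun t => (η t)⁻¹ * DPsi (x t) (ztilde t))]
      have hPsplit : ∑ t ∈ Finset.Icc 1 (n + 1 - 1), ∑ i, |θ (t + 1) i - θ t i|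
          = (∑ t ∈ Finset.Icc 1 (n - 1), ∑ i, |θ (t + 1) i - θ t i|)
            + ∑ i, |θ (n + 1) i - θ n i| := by
        have h1 : n + 1 - 1 = (n - 1) + 1 := by omega
        have h2 : n - 1 + 1 = n := by omega
        rw [h1, Finset.sum_Icc_succ_top (by omega : 1 ≤ n - 1 + 1), h2]
      rw [hPsplit]
      set S := ∑ t ∈ Finset.Icc 1 (n - 1), ∑ i, |θ (t + 1) i - θ t i| with hSdef
      set P := ∑ i, |θ (n + 1) i - θ n i| with hPdef
      have hS0 : 0 ≤ S :=
        Finset.sum_nonneg fun t _ => Finset.sum_nonneg fun i _ => abs_nonneg _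
      have hP0 : 0 ≤ P := Finset.sum_nonneg fun i _ => abs_nonneg _
      set a := ∑ i, θ n i * Real.log (x (n + 1) i) with hadef
      set d := ∑ i, (θ n i - θ (n + 1) i) * Real.log (x (n + 1) i) with hddef
      have hd : d ≤ P * L := by
        have := habs (n + 1) (by omega) (by omega) (fun i => θ n i - θ (n + 1) i)
        have habseq : (∑ i, |θ n i - θ (n + 1) i|) = P := by
          rw [hPdef]; exact Finset.sum_congr rfl fun i _ => abs_sub_comm _ _
        rw [habseq] at this
        exact this
      have ha : -L ≤ a := hdotlb (n + 1) (by omega) (by omega) (θ n) hθnnn hθn.2.2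
      have hstep := step (n + 1) hn1mem
      have hsplitdot : (∑ i, θ (n + 1) i * (Real.log (x (n + 2) i) - Real.log (x (n + 1) i)))
          = (∑ i, θ (n + 1) i * Real.log (x (n + 2) i))
            - ∑ i, θ (n + 1) i * Real.log (x (n + 1) i) := by
        rw [← Finset.sum_sub_distrib]
        exact Finset.sum_congr rfl fun i _ => by ring
      have hdot' : (∑ i, θ (n + 1) i * Real.log (x (n + 1) i)) = a - d := by
        rw [hadef, hddef, ← Finset.sum_sub_distrib]
        exact Finset.sum_congr rfl fun i _ => by ring
      rw [hsplitdot, hdot'] at hstep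
      have hinvn1 : (0:ℝ) ≤ (η (n + 1))⁻¹ := inv_nonneg.2 hηn1.le
      have h8 : (η n)⁻¹ * a - (η (n + 1))⁻¹ * a ≤ ((η (n + 1))⁻¹ - (η n)⁻¹) * L := by
        nlinarith [mul_nonneg (sub_nonneg.2 hinvmono) (by linarith : (0:ℝ) ≤ a + L)]
      have h9 : (0:ℝ) ≤ ((η (n + 1))⁻¹ - (η n)⁻¹) * (L * S) :=
        mul_nonneg (sub_nonneg.2 hinvmono) (mul_nonneg hL0 hS0)
      have h10 : (η (n + 1))⁻¹ * d ≤ (η (n + 1))⁻¹ * (P * L) :=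
        mul_le_mul_of_nonneg_left hd hinvn1
      have h11 : n + 1 + 1 = n + 2 := by omega
      rw [h11] at hstep
      linarith [ih', hstep, h8, h9, h10]
  -- conclusion
  have hmain := main T hT le_rfl
  have hηT : 0 < η T := hηpos T hTmem
  have hinvT : (0:ℝ) ≤ (η T)⁻¹ := inv_nonneg.2 hηT.le
  have hθT := simplexB_facts hβT (hθ T hTmem)
  have hθTpos : ∀ i, 0 < θ T i := fun i => lt_of_lt_of_le hβT (hθT.1 i)
  have hzT := simplexB_facts hβT (hzmem T hTmem)
  have hzTpos : ∀ i, 0 < z T i := fun i => lt_of_lt_of_le hβT (hzT.1 i)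
  have hDid : DPsi (θ T) (z T) = (∑ i, θ T i * Real.log (θ T i))
      - ∑ i, θ T i * Real.log (z T i) := by
    unfold DPsi
    have he : ∀ i ∈ Finset.univ, θ T i * Real.log (θ T i / z T i) - θ T i + z T i
        = (θ T i * Real.log (θ T i) - θ T i * Real.log (z T i)) + (z T i - θ T i) := by
      intro i _
      rw [Real.log_div (hθTpos i).ne' (hzTpos i).ne']
      ring
    rw [Finset.sum_congr rfl he, Finset.sum_add_distrib, Finset.sum_sub_distrib,
      Finset.sum_sub_distrib, hθT.2.2, hzT.2.2]
    ring
  have hneg : (∑ i, θ T i * Real.log (θ T i)) ≤ 0 :=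
    Finset.sum_nonpos fun i _ =>
      mul_nonpos_of_nonneg_of_nonpos (hθTpos i).le
        (Real.log_nonpos (hθTpos i).le (hθT.2.1 i))
  have hdotT : (∑ i, θ T i * Real.log (x (T + 1) i)) ≤ -DPsi (θ T) (z T) := by
    rw [hxrec T hTmem]
    linarith [hDid, hneg]
  have hmul := mul_le_mul_of_nonneg_left hdotT hinvT
  linarith [hmain, hmul]
end

section
/- Let K ≥ 1, M > 0, and let Q_0, Q_1, Q_2, … be a K-dimensional queue-length sequence with increments bounded by M and with Q_0 = 0. Then for every T ≥ 1: Σ_{t=1}^T ‖Q_{t−1}‖₂² ≤ 4·√M·(Σ_{t=1}^T ‖Q_{t−1}‖₁)^{3/2}. -/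
/-- for a `K`-dimensional queue-length sequence with increments bounded by
`M` starting from `0`: `Σ_{t=1}^T ‖Q_{t−1}‖₂² ≤ 4·√M·(Σ_{t=1}^T ‖Q_{t−1}‖₁)^{3/2}`. -/
theorem sum_sq_norm_le_of_bounded_increments (K : ℕ) (hK : 1 ≤ K) (M : ℝ) (hM : 0 < M)
    (Q : ℕ → Fin K → ℝ)
    (hQ0 : ∀ i, Q 0 i = 0)
    (hnonneg : ∀ t i, 0 ≤ Q t i)
    (hinc : ∀ t : ℕ, 1 ≤ t → ∀ i, |Q t i - Q (t - 1) i| ≤ M)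
    (T : ℕ) (hT : 1 ≤ T) :
    ∑ t ∈ Finset.Icc 1 T, ∑ i, (Q (t - 1) i) ^ 2 ≤
      4 * Real.sqrt M *
        (∑ t ∈ Finset.Icc 1 T, ∑ i, |Q (t - 1) i|) ^ ((3 : ℝ) / 2) := by
  -- replace |Q| with Q
  have habs : (∑ t ∈ Finset.Icc 1 T, ∑ i, |Q (t - 1) i|)
      = ∑ t ∈ Finset.Icc 1 T, ∑ i, Q (t - 1) i := by
    refine Finset.sum_congr rfl fun t _ => Finset.sum_congr rfl fun i _ => ?_
    exact abs_of_nonneg (hnonneg _ _)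
  rw [habs]
  set S := ∑ t ∈ Finset.Icc 1 T, ∑ i, Q (t - 1) i with hSdef
  have hSnonneg : 0 ≤ S :=
    Finset.sum_nonneg fun t _ => Finset.sum_nonneg fun i _ => hnonneg _ _
  -- growth bound: Q t i ≤ Q s i + M * (t - s)
  have key : ∀ (i : Fin K) (s t : ℕ), s ≤ t → Q t i ≤ Q s i + M * ((t : ℝ) - (s : ℝ)) := by
    intro i s t hst
    induction t, hst using Nat.le_induction with
    | base => simp
    | succ t ht ih =>
      have h1 := hinc (t + 1) (by omega) i
      simp only [Nat.add_sub_cancel] at h1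
      have h2 := (abs_le.mp h1).2
      push_cast
      push_cast at ih
      linarith
  -- the maximum B
  have hne : (Finset.Icc 1 T ×ˢ (Finset.univ : Finset (Fin K))).Nonempty := by
    refine Finset.Nonempty.product ?_ ?_
    · exact ⟨1, by simp [hT]⟩
    · exact ⟨⟨0, hK⟩, Finset.mem_univ _⟩
  obtain ⟨p, hp, hmax⟩ :=
    Finset.exists_max_image (Finset.Icc 1 T ×ˢ (Finset.univ : Finset (Fin K)))
      (fun p => Q (p.1 - 1) p.2) hne
  obtain ⟨t₀, i₀⟩ := p
  have ht₀mem : t₀ ∈ Finset.Icc 1 T := (Finset.mem_product.mp hp).1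
  have ht₀1 : 1 ≤ t₀ := (Finset.mem_Icc.mp ht₀mem).1
  have ht₀T : t₀ ≤ T := (Finset.mem_Icc.mp ht₀mem).2
  set B := Q (t₀ - 1) i₀ with hBdef
  have hBnonneg : 0 ≤ B := hnonneg _ _
  have hmax' : ∀ t ∈ Finset.Icc 1 T, ∀ i, Q (t - 1) i ≤ B := by
    intro t ht i
    exact hmax (t, i) (Finset.mem_product.mpr ⟨ht, Finset.mem_univ i⟩)
  -- B ≤ M * (t₀ - 1)
  have hBle : B ≤ M * ((t₀ - 1 : ℕ) : ℝ) := by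
    have := key i₀ 0 (t₀ - 1) (Nat.zero_le _)
    rw [hQ0 i₀] at this
    simpa using this
  -- the count n
  set n := ⌊B / (2 * M)⌋₊ with hndef
  have hdivnonneg : 0 ≤ B / (2 * M) := div_nonneg hBnonneg (by linarith)
  have hn1 : (n : ℝ) ≤ B / (2 * M) := Nat.floor_le hdivnonneg
  have hn2 : n + 1 ≤ t₀ := by
    have h1 : (n : ℝ) ≤ ((t₀ - 1 : ℕ) : ℝ) := by
      rw [le_div_iff₀ (by linarith : (0:ℝ) < 2 * M)] at hn1
      nlinarith
    have : n ≤ t₀ - 1 := by exact_mod_cast h1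
    omega
  -- values close to the max time are ≥ B/2
  have hlow : ∀ j ∈ Finset.range (n + 1), B / 2 ≤ Q (t₀ - 1 - j) i₀ := by
    intro j hj
    have hj' : j ≤ n := Nat.lt_succ_iff.mp (Finset.mem_range.mp hj)
    have hjt : j ≤ t₀ - 1 := by omega
    have hk := key i₀ (t₀ - 1 - j) (t₀ - 1) (by omega)
    have hcast : ((t₀ - 1 : ℕ) : ℝ) - ((t₀ - 1 - j : ℕ) : ℝ) = (j : ℝ) := by
      have : ((t₀ - 1 - j : ℕ) : ℝ) = ((t₀ - 1 : ℕ) : ℝ) - (j : ℝ) := by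
        push_cast [Nat.cast_sub hjt]
        ring
      rw [this]; ring
    rw [hcast] at hk
    have hjB : (j : ℝ) ≤ B / (2 * M) := le_trans (by exact_mod_cast hj') hn1
    have : M * (j : ℝ) ≤ B / 2 := by
      rw [le_div_iff₀ (by linarith : (0:ℝ) < 2 * M)] at hjB
      nlinarith
    linarith
  -- S ≥ B^2 / (4M)
  have hSB : B ^ 2 / (4 * M) ≤ S := by
    have step1 : B ^ 2 / (4 * M) ≤ ((n : ℝ) + 1) * (B / 2) := by
      have h1 : B / (2 * M) ≤ (n : ℝ) + 1 := le_of_lt (Nat.lt_floor_add_one _)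
      have h2 : B ^ 2 / (4 * M) = (B / (2 * M)) * (B / 2) := by
        field_simp; ring
      rw [h2]
      exact mul_le_mul_of_nonneg_right h1 (by linarith)
    have step2 : ((n : ℝ) + 1) * (B / 2) ≤ ∑ j ∈ Finset.range (n + 1), Q (t₀ - 1 - j) i₀ := by
      calc ((n : ℝ) + 1) * (B / 2)
          = ∑ _j ∈ Finset.range (n + 1), B / 2 := by
            rw [Finset.sum_const, Finset.card_range]; push_cast; ring
        _ ≤ ∑ j ∈ Finset.range (n + 1), Q (t₀ - 1 - j) i₀ :=
            Finset.sum_le_sum hlow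
    have step3 : ∑ j ∈ Finset.range (n + 1), Q (t₀ - 1 - j) i₀
        ≤ ∑ j ∈ Finset.range t₀, Q (t₀ - 1 - j) i₀ := by
      apply Finset.sum_le_sum_of_subset_of_nonneg
      · exact Finset.range_subset_range.mpr hn2
      · intro j _ _; exact hnonneg _ _
    have step4 : ∑ j ∈ Finset.range t₀, Q (t₀ - 1 - j) i₀
        = ∑ s ∈ Finset.range t₀, Q s i₀ := Finset.sum_range_reflect (fun s => Q s i₀) t₀
    have step5 : ∑ s ∈ Finset.range t₀, Q s i₀ ≤ S := by
      have hform : S = ∑ s ∈ Finset.range T, ∑ i, Q s i := by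
        rw [hSdef, show Finset.Icc 1 T = Finset.Ico 1 (T + 1) from (Finset.Ico_add_one_right_eq_Icc 1 T).symm,
          Finset.sum_Ico_eq_sum_range]
        simp
      rw [hform]
      calc ∑ s ∈ Finset.range t₀, Q s i₀
          ≤ ∑ s ∈ Finset.range T, Q s i₀ := by
            apply Finset.sum_le_sum_of_subset_of_nonneg
            · exact Finset.range_subset_range.mpr ht₀T
            · intro s _ _; exact hnonneg _ _
        _ ≤ ∑ s ∈ Finset.range T, ∑ i, Q s i := by
            apply Finset.sum_le_sum
            intro s _
            exact Finset.single_le_sum (fun i _ => hnonneg s i) (Finset.mem_univ i₀)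
    calc B ^ 2 / (4 * M) ≤ ((n : ℝ) + 1) * (B / 2) := step1
      _ ≤ ∑ j ∈ Finset.range (n + 1), Q (t₀ - 1 - j) i₀ := step2
      _ ≤ ∑ j ∈ Finset.range t₀, Q (t₀ - 1 - j) i₀ := step3
      _ = ∑ s ∈ Finset.range t₀, Q s i₀ := step4
      _ ≤ S := step5
  -- LHS ≤ B * S
  have hLHS : ∑ t ∈ Finset.Icc 1 T, ∑ i, (Q (t - 1) i) ^ 2 ≤ B * S := by
    rw [hSdef, Finset.mul_sum]
    apply Finset.sum_le_sum
    intro t ht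
    rw [Finset.mul_sum]
    apply Finset.sum_le_sum
    intro i _
    have h1 := hmax' t ht i
    have h2 := hnonneg (t - 1) i
    nlinarith
  -- B ≤ 2 √M √S
  have hB2 : B ≤ 2 * Real.sqrt M * Real.sqrt S := by
    have hB2' : B ^ 2 ≤ 4 * M * S := by
      rw [div_le_iff₀ (by linarith : (0:ℝ) < 4 * M)] at hSB
      linarith
    calc B = Real.sqrt (B ^ 2) := (Real.sqrt_sq hBnonneg).symm
      _ ≤ Real.sqrt (4 * M * S) := Real.sqrt_le_sqrt hB2'
      _ = 2 * Real.sqrt M * Real.sqrt S := by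
          rw [show (4:ℝ) * M * S = (2 * Real.sqrt M * Real.sqrt S) ^ 2 by
            rw [mul_pow, mul_pow, Real.sq_sqrt hM.le, Real.sq_sqrt hSnonneg]; ring]
          exact Real.sqrt_sq (by positivity)
    -- done
  have hrpow : Real.sqrt S * S = S ^ ((3 : ℝ) / 2) := by
    rw [Real.sqrt_eq_rpow]
    rw [show ((3:ℝ)/2) = 1/2 + 1 by norm_num,
      Real.rpow_add' hSnonneg (by norm_num), Real.rpow_one]
  calc ∑ t ∈ Finset.Icc 1 T, ∑ i, (Q (t - 1) i) ^ 2
      ≤ B * S := hLHS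
    _ ≤ (2 * Real.sqrt M * Real.sqrt S) * S := by
        apply mul_le_mul_of_nonneg_right hB2 hSnonneg
    _ = 2 * Real.sqrt M * (Real.sqrt S * S) := by ring
    _ = 2 * Real.sqrt M * S ^ ((3:ℝ)/2) := by rw [hrpow]
    _ ≤ 4 * Real.sqrt M * S ^ ((3:ℝ)/2) := by
        have h1 : 0 ≤ Real.sqrt M := Real.sqrt_nonneg M
        have h2 : 0 ≤ S ^ ((3:ℝ)/2) := Real.rpow_nonneg hSnonneg _
        nlinarith
end

section
/- Let y, f, g : ℝ_{≥0} → [1, ∞) be three nondecreasing functions. If y(x) ≤ f(x) + y(x)^{1/4}·g(x) for all x ≥ 0, then y(x) ≤ (f(x)^{1/4} + g(x))^4 for all x ≥ 0. -/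
/-- if `y, f, g : ℝ₊ → [1,∞)` are nondecreasing and
`y(x) ≤ f(x) + y(x)^{1/4}·g(x)` for all `x ≥ 0`, then
`y(x) ≤ (f(x)^{1/4} + g(x))⁴` for all `x ≥ 0`. -/
theorem self_bound_quarter_power (y f g : ℝ → ℝ)
    (hy1 : ∀ x, 0 ≤ x → 1 ≤ y x)
    (hf1 : ∀ x, 0 ≤ x → 1 ≤ f x)
    (hg1 : ∀ x, 0 ≤ x → 1 ≤ g x)
    (hymono : ∀ a b, 0 ≤ a → a ≤ b → y a ≤ y b)
    (hfmono : ∀ a b, 0 ≤ a → a ≤ b → f a ≤ f b)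
    (hgmono : ∀ a b, 0 ≤ a → a ≤ b → g a ≤ g b)
    (h : ∀ x, 0 ≤ x → y x ≤ f x + y x ^ ((1 : ℝ) / 4) * g x) :
    ∀ x, 0 ≤ x → y x ≤ (f x ^ ((1 : ℝ) / 4) + g x) ^ 4 := by
  intro x hx
  have hY : (1:ℝ) ≤ y x := hy1 x hx
  have hF : (1:ℝ) ≤ f x := hf1 x hx
  have hG : (1:ℝ) ≤ g x := hg1 x hx
  have hY0 : (0:ℝ) ≤ y x := le_trans zero_le_one hY
  have hF0 : (0:ℝ) ≤ f x := le_trans zero_le_one hF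
  set u := y x ^ ((1:ℝ)/4) with hu
  set a := f x ^ ((1:ℝ)/4) with ha
  have hu1 : (1:ℝ) ≤ u := Real.one_le_rpow hY (by norm_num)
  have ha1 : (1:ℝ) ≤ a := Real.one_le_rpow hF (by norm_num)
  have hu4 : u ^ 4 = y x := by
    rw [hu, ← Real.rpow_natCast (y x ^ ((1:ℝ)/4)) 4, ← Real.rpow_mul hY0]
    norm_num
  have ha4 : a ^ 4 = f x := by
    rw [ha, ← Real.rpow_natCast (f x ^ ((1:ℝ)/4)) 4, ← Real.rpow_mul hF0]
    norm_num
  have key : u ^ 4 ≤ a ^ 4 + u * g x := by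
    rw [hu4, ha4]; exact h x hx
  have ha0 : (0:ℝ) ≤ a := le_trans zero_le_one ha1
  have hG0 : (0:ℝ) ≤ g x := le_trans zero_le_one hG
  have main : u ≤ a + g x := by
    by_contra hlt
    push_neg at hlt
    have hc3 : a ^ 3 + g x ≤ (a + g x) ^ 3 := by
      nlinarith [mul_nonneg (mul_nonneg ha0 ha0) hG0, mul_nonneg (mul_nonneg ha0 hG0) hG0,
        mul_le_mul_of_nonneg_left (one_le_pow₀ hG : (1:ℝ) ≤ g x ^ 2) hG0]
    have hu3 : (a + g x) ^ 3 < u ^ 3 :=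
      pow_lt_pow_left₀ hlt (by positivity) (by norm_num)
    have h1 : a ^ 3 < u ^ 3 - g x := by linarith
    have h2 : (a + g x) * a ^ 3 < u * (u ^ 3 - g x) :=
      mul_lt_mul' (le_of_lt hlt) h1 (by positivity) (by linarith [lt_of_le_of_lt (le_add_of_nonneg_left ha0) hlt] : 0 < u)
    nlinarith
  calc y x = u ^ 4 := hu4.symm
    _ ≤ (a + g x) ^ 4 := by
        apply pow_le_pow_left₀ (le_trans zero_le_one hu1) main
end

section
/- Let K ≥ 1, M > 0, and let Q_0, Q_1, Q_2, … be a K-dimensional queue-length sequence with increments bounded by M and with Q_0 = 0. Then for every T ≥ 1: Σ_{t=0}^{T−1} ‖Q_t‖₂² ≥ (1/(3·M·K³))·‖Q_{T−1}‖₁³. -/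
lemma cube_telescope (a b : ℝ) (ha : 0 < a) :
    (max b 0) ^ 3 - (max (b - a) 0) ^ 3 ≤ 3 * a * (max b 0) ^ 2 := by
  rcases le_or_gt b 0 with hb | hb
  · rw [max_eq_right hb, max_eq_right (by linarith)]
    norm_num
  · rw [max_eq_left hb.le]
    rcases le_or_gt (b - a) 0 with hba | hba
    · rw [max_eq_right hba]
      nlinarith
    · rw [max_eq_left hba.le]
      nlinarith [mul_pos (mul_pos ha ha) hb, mul_pos (mul_pos ha ha) hba]

/-- for a `K`-dimensional queue-length sequence with increments bounded by
`M` starting from `0`: `Σ_{t=0}^{T−1} ‖Q_t‖₂² ≥ (1/(3·M·K³))·‖Q_{T−1}‖₁³`. -/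
theorem sum_sq_norm_ge_of_bounded_increments (K : ℕ) (hK : 1 ≤ K) (M : ℝ) (hM : 0 < M)
    (Q : ℕ → Fin K → ℝ)
    (hQ0 : ∀ i, Q 0 i = 0)
    (hnonneg : ∀ t i, 0 ≤ Q t i)
    (hinc : ∀ t : ℕ, 1 ≤ t → ∀ i, |Q t i - Q (t - 1) i| ≤ M)
    (T : ℕ) (hT : 1 ≤ T) :
    (1 / (3 * M * (K : ℝ) ^ 3)) * (∑ i, |Q (T - 1) i|) ^ 3 ≤
      ∑ t ∈ Finset.range T, ∑ i, (Q t i) ^ 2 := by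
  have hKpos : (0:ℝ) < K := by exact_mod_cast hK
  set a : ℝ := M * K with ha
  have hapos : 0 < a := mul_pos hM hKpos
  set S : ℕ → ℝ := fun t => ∑ i, Q t i with hS
  have hSnn : ∀ t, 0 ≤ S t := fun t => Finset.sum_nonneg fun i _ => hnonneg t i
  have hS0 : S 0 = 0 := by simp [hS, hQ0]
  have hstep : ∀ t, S (t + 1) ≤ S t + a := by
    intro t
    have h1 : S (t + 1) - S t = ∑ i, (Q (t + 1) i - Q t i) := by
      simp [hS, Finset.sum_sub_distrib]
    have h2 : ∑ i, (Q (t + 1) i - Q t i) ≤ ∑ _i : Fin K, M := by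
      apply Finset.sum_le_sum
      intro i _
      have := hinc (t + 1) (by omega) i
      simp only [Nat.add_sub_cancel] at this
      exact (abs_le.mp this).2
    simp only [Finset.sum_const, Finset.card_univ, Fintype.card_fin, nsmul_eq_mul] at h2
    have : S (t + 1) - S t ≤ a := by rw [h1, ha]; linarith [h2]
    linarith
  have hgrow : ∀ u v : ℕ, S (u + v) ≤ S u + v * a := by
    intro u v
    induction v with
    | zero => simp
    | succ n ih =>
      have := hstep (u + n)
      push_cast
      calc S (u + (n + 1)) = S (u + n + 1) := by ring_nf
        _ ≤ S (u + n) + a := this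
        _ ≤ S u + n * a + a := by linarith
        _ = S u + (n + 1) * a := by ring
  -- abs equals value
  have habs : (∑ i, |Q (T - 1) i|) = S (T - 1) := by
    simp [hS, abs_of_nonneg, hnonneg]
  set Sf : ℝ := S (T - 1) with hSf
  -- lower bound for S t
  have hlow : ∀ t ∈ Finset.range T, max (Sf - (T - 1 - t : ℕ) * a) 0 ≤ S t := by
    intro t ht
    rw [Finset.mem_range] at ht
    have h1 : t + (T - 1 - t) = T - 1 := by omega
    have := hgrow t (T - 1 - t)
    rw [h1] at this
    exact max_le (by linarith) (hSnn t)
  -- Cauchy-Schwarz per t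
  have hcs : ∀ t, (S t) ^ 2 / K ≤ ∑ i, (Q t i) ^ 2 := by
    intro t
    have := sq_sum_le_card_mul_sum_sq (s := Finset.univ) (f := Q t)
    simp only [Finset.card_univ, Fintype.card_fin] at this
    rw [div_le_iff₀ hKpos]
    calc (S t) ^ 2 ≤ (K : ℝ) * ∑ i, (Q t i) ^ 2 := by exact_mod_cast this
      _ = (∑ i, (Q t i) ^ 2) * K := by ring
  -- main chain
  have key : Sf ^ 3 / (3 * a) ≤ ∑ t ∈ Finset.range T, (S t) ^ 2 := by
    have h1 : ∑ t ∈ Finset.range T, (max (Sf - (T - 1 - t : ℕ) * a) 0) ^ 2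
        ≤ ∑ t ∈ Finset.range T, (S t) ^ 2 := by
      apply Finset.sum_le_sum
      intro t ht
      exact pow_le_pow_left₀ (le_max_right _ _) (hlow t ht) 2
    have h2 : ∑ t ∈ Finset.range T, (max (Sf - (T - 1 - t : ℕ) * a) 0) ^ 2
        = ∑ s ∈ Finset.range T, (max (Sf - (s : ℕ) * a) 0) ^ 2 := by
      exact Finset.sum_range_reflect (fun s => (max (Sf - (s : ℕ) * a) 0) ^ 2) T
    set F : ℕ → ℝ := fun s => (max (Sf - s * a) 0) ^ 3 with hF
    have h3 : ∀ s : ℕ, (F s - F (s + 1)) / (3 * a) ≤ (max (Sf - s * a) 0) ^ 2 := by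
      intro s
      rw [div_le_iff₀ (by linarith)]
      have := cube_telescope a (Sf - s * a) hapos
      have he : Sf - s * a - a = Sf - (s + 1 : ℕ) * a := by push_cast; ring
      rw [he] at this
      calc F s - F (s + 1) ≤ 3 * a * (max (Sf - s * a) 0) ^ 2 := this
        _ = (max (Sf - s * a) 0) ^ 2 * (3 * a) := by ring
    have h4 : ∑ s ∈ Finset.range T, (F s - F (s + 1)) = F 0 - F T :=
      Finset.sum_range_sub' F T
    have hFT : F T = 0 := by
      have h5 : Sf ≤ (T - 1 : ℕ) * a := by
        have := hgrow 0 (T - 1)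
        simp [hS0] at this
        exact this
      have h6 : ((T - 1 : ℕ) : ℝ) * a ≤ (T : ℕ) * a := by
        apply mul_le_mul_of_nonneg_right _ hapos.le
        exact_mod_cast Nat.sub_le T 1
      have : Sf - T * a ≤ 0 := by linarith
      simp [hF, max_eq_right this]
    have hF0 : F 0 = Sf ^ 3 := by
      have : (0:ℝ) ≤ Sf := hSnn _
      simp [hF, max_eq_left this]
    calc Sf ^ 3 / (3 * a) = (F 0 - F T) / (3 * a) := by rw [hF0, hFT]; ring_nf
      _ = ∑ s ∈ Finset.range T, (F s - F (s + 1)) / (3 * a) := by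
          rw [← Finset.sum_div, h4]
      _ ≤ ∑ s ∈ Finset.range T, (max (Sf - (s : ℕ) * a) 0) ^ 2 :=
          Finset.sum_le_sum fun s _ => h3 s
      _ = ∑ t ∈ Finset.range T, (max (Sf - (T - 1 - t : ℕ) * a) 0) ^ 2 := h2.symm
      _ ≤ ∑ t ∈ Finset.range T, (S t) ^ 2 := h1
  have final : Sf ^ 3 / (3 * a * K) ≤ ∑ t ∈ Finset.range T, ∑ i, (Q t i) ^ 2 := by
    calc Sf ^ 3 / (3 * a * K) = (Sf ^ 3 / (3 * a)) / K := by
          rw [div_div]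
      _ ≤ (∑ t ∈ Finset.range T, (S t) ^ 2) / K := by
          gcongr
      _ = ∑ t ∈ Finset.range T, (S t) ^ 2 / K := Finset.sum_div _ _ _
      _ ≤ ∑ t ∈ Finset.range T, ∑ i, (Q t i) ^ 2 :=
          Finset.sum_le_sum fun t _ => hcs t
  rw [habs]
  have hK1 : (1:ℝ) ≤ K := by exact_mod_cast hK
  have hle : 1 / (3 * M * (K:ℝ) ^ 3) ≤ 1 / (3 * a * K) := by
    apply one_div_le_one_div_of_le (by positivity)
    rw [ha]
    nlinarith [mul_le_mul_of_nonneg_right hK1 (mul_nonneg (mul_nonneg hM.le hKpos.le) hKpos.le)]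
  calc 1 / (3 * M * (K:ℝ) ^ 3) * Sf ^ 3 ≤ 1 / (3 * a * K) * Sf ^ 3 :=
        mul_le_mul_of_nonneg_right hle (pow_nonneg (hSnn _) 3)
    _ = Sf ^ 3 / (3 * a * K) := by ring
    _ ≤ _ := final
end

section
/- Let K ≥ 1, M > 0, δ ≥ 0, and let Q_0, Q_1, Q_2, … be a K-dimensional queue-length sequence with increments bounded by M and with Q_0 = 0. Then for every integer t ≥ 1: 2·‖Q_{t−1}‖₁ ≤ t^{−(1/4 − δ/2)}·√(86·M²·K⁶·t^{3/2} + Σ_{s=0}^{t−1} ‖Q_s‖₂²). (Equivalently, the explicit exploration rates γ_t = M·η_t·‖Q_{t−1}‖₁ chosen by the SoftMW algorithm, with η_t = (t^{−(1/4 − δ/2)}·M·√(86·M²·K⁶·t^{3/2} + Σ_{s=0}^{t−1}‖Q_s‖₂²))^{−1}, never exceed 1/2.) -/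
/-- feasibility of the SoftMW exploration rates: for a `K`-dimensional
queue-length sequence with increments bounded by `M` and `Q_0 = 0`, for every `t ≥ 1`,
`2·‖Q_{t−1}‖₁ ≤ t^{−(1/4 − δ/2)}·√(86·M²·K⁶·t^{3/2} + Σ_{s=0}^{t−1} ‖Q_s‖₂²)`. -/
theorem softmw_exploration_rate_feasible (K : ℕ) (hK : 1 ≤ K) (M δ : ℝ)
    (hM : 0 < M) (hδ : 0 ≤ δ)
    (Q : ℕ → Fin K → ℝ)
    (hQ0 : ∀ i, Q 0 i = 0)
    (hnonneg : ∀ t i, 0 ≤ Q t i)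
    (hinc : ∀ t : ℕ, 1 ≤ t → ∀ i, |Q t i - Q (t - 1) i| ≤ M) :
    ∀ t : ℕ, 1 ≤ t →
      2 * (∑ i, |Q (t - 1) i|) ≤
        (t : ℝ) ^ (-(1 / 4 - δ / 2) : ℝ) *
          Real.sqrt (86 * M ^ 2 * (K : ℝ) ^ 6 * (t : ℝ) ^ ((3 : ℝ) / 2) +
            ∑ s ∈ Finset.range t, ∑ i, (Q s i) ^ 2) := by
  -- general increment bound
  have hstep : ∀ (i : Fin K) (u d : ℕ), |Q (u + d) i - Q u i| ≤ M * d := by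
    intro i u d
    induction d with
    | zero => simp
    | succ d ih =>
      have h1 := hinc (u + d + 1) (by omega) i
      have e : u + d + 1 - 1 = u + d := by omega
      rw [e] at h1
      have e2 : Q (u + (d + 1)) i - Q u i =
          (Q (u + d + 1) i - Q (u + d) i) + (Q (u + d) i - Q u i) := by
        have e3 : u + (d + 1) = u + d + 1 := by omega
        rw [e3]; ring
      rw [e2]
      calc |(Q (u + d + 1) i - Q (u + d) i) + (Q (u + d) i - Q u i)|
          ≤ |Q (u + d + 1) i - Q (u + d) i| + |Q (u + d) i - Q u i| := abs_add_le _ _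
        _ ≤ M + M * d := add_le_add h1 ih
        _ = M * ((d + 1 : ℕ) : ℝ) := by push_cast; ring
  intro t ht
  set n := t - 1 with hn
  -- lower bound on past queues
  have hpast : ∀ (i : Fin K) (j : ℕ), j ≤ n → Q n i - M * j ≤ Q (n - j) i := by
    intro i j hj
    have h := hstep i (n - j) j
    have e : n - j + j = n := by omega
    rw [e] at h
    have := (abs_le.mp h).2
    linarith
  -- upper bound Q n i ≤ M * t
  have hup : ∀ i : Fin K, Q n i ≤ M * t := by
    intro i
    have h := hstep i 0 n
    simp only [Nat.zero_add, hQ0, sub_zero] at h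
    have h2 := (abs_le.mp h).2
    have hnat : (n : ℝ) ≤ (t : ℝ) := by exact_mod_cast (by omega : n ≤ t)
    nlinarith
  -- per-coordinate sum lower bound: (Q n i)^3 ≤ 3M * ∑_{s<t} (Q s i)^2
  have key : ∀ i : Fin K, (Q n i) ^ 3 ≤ 3 * M * ∑ s ∈ Finset.range t, (Q s i) ^ 2 := by
    intro i
    set a := Q n i with ha
    have ha0 : 0 ≤ a := hnonneg n i
    set g : ℕ → ℝ := fun j => (max (a - M * j) 0) ^ 3 with hg
    have htel : ∑ j ∈ Finset.range t, (g j - g (j + 1)) = g 0 - g t :=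
      Finset.sum_range_sub' g t
    have hg0 : g 0 = a ^ 3 := by
      simp only [hg, Nat.cast_zero, mul_zero, sub_zero]
      rw [max_eq_left ha0]
    have hgt : g t = 0 := by
      simp only [hg]
      have hat : a - M * t ≤ 0 := by
        have := hup i
        linarith
      rw [max_eq_right hat]
      norm_num
    have hterm : ∀ j ∈ Finset.range t, g j - g (j + 1) ≤ 3 * M * (Q (n - j) i) ^ 2 := by
      intro j hj
      have hjn : j ≤ n := by
        have := Finset.mem_range.mp hj; omega
      set p := max (a - M * j) 0 with hp
      set q := max (a - M * ((j + 1 : ℕ) : ℝ)) 0 with hq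
      have hp0 : 0 ≤ p := le_max_right _ _
      have hq0 : 0 ≤ q := le_max_right _ _
      have hqp : q ≤ p := by
        apply max_le _ hp0
        refine le_trans ?_ (le_max_left _ _)
        push_cast
        nlinarith
      have hpq : p - q ≤ M := by
        rcases le_or_gt (a - M * j) 0 with h | h
        · rw [hp, max_eq_right h]; linarith
        · rw [hp, max_eq_left h.le]
          have hqc : a - M * j - M ≤ q := by
            refine le_trans (le_of_eq ?_) (le_max_left _ _)
            push_cast; ring
          linarith
      have hpQ : p ≤ Q (n - j) i := max_le (hpast i j hjn) (hnonneg _ i)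
      have h1 : p ^ 3 - q ^ 3 ≤ 3 * M * p ^ 2 := by
        nlinarith [mul_nonneg (mul_nonneg (sub_nonneg.mpr hqp) (sub_nonneg.mpr hqp))
            (by linarith : (0:ℝ) ≤ 2 * p + q),
          mul_nonneg (by linarith : (0:ℝ) ≤ M - (p - q)) (sq_nonneg p)]
      have h2 : p ^ 2 ≤ (Q (n - j) i) ^ 2 := by nlinarith
      calc g j - g (j + 1) = p ^ 3 - q ^ 3 := by
            simp only [hg, hp, hq]
        _ ≤ 3 * M * p ^ 2 := h1
        _ ≤ 3 * M * (Q (n - j) i) ^ 2 := by nlinarith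
    have hsum : a ^ 3 ≤ ∑ j ∈ Finset.range t, 3 * M * (Q (n - j) i) ^ 2 := by
      calc a ^ 3 = g 0 - g t := by rw [hg0, hgt]; ring
        _ = ∑ j ∈ Finset.range t, (g j - g (j + 1)) := htel.symm
        _ ≤ _ := Finset.sum_le_sum hterm
    have hrefl : ∑ j ∈ Finset.range t, (Q (n - j) i) ^ 2
        = ∑ s ∈ Finset.range t, (Q s i) ^ 2 := by
      have := Finset.sum_range_reflect (fun s => (Q s i) ^ 2) t
      simpa [hn] using this
    rw [← Finset.mul_sum] at hsum
    rw [← hrefl]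
    exact hsum
  -- total sums
  set A := ∑ i : Fin K, Q n i with hA
  set Stot := ∑ s ∈ Finset.range t, ∑ i : Fin K, (Q s i) ^ 2 with hStot
  have hA0 : 0 ≤ A := Finset.sum_nonneg fun i _ => hnonneg n i
  have hS0pre : 0 ≤ Stot := Finset.sum_nonneg fun s _ =>
    Finset.sum_nonneg fun i _ => sq_nonneg _
  have hKR : (1 : ℝ) ≤ (K : ℝ) := by exact_mod_cast hK
  have hcube : A ^ 3 / (K : ℝ) ^ 2 ≤ ∑ i : Fin K, (Q n i) ^ 3 := by
    have h := pow_sum_div_card_le_sum_pow (s := (Finset.univ : Finset (Fin K)))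
      (f := fun i => Q n i) (fun i _ => hnonneg n i) 2
    simpa [hA] using h
  have hsum3 : ∑ i : Fin K, (Q n i) ^ 3 ≤ 3 * M * Stot := by
    calc ∑ i : Fin K, (Q n i) ^ 3
        ≤ ∑ i : Fin K, 3 * M * ∑ s ∈ Finset.range t, (Q s i) ^ 2 :=
          Finset.sum_le_sum fun i _ => key i
      _ = 3 * M * Stot := by
          rw [← Finset.mul_sum, hStot, Finset.sum_comm]
  have hA3 : A ^ 3 ≤ 3 * M * (K : ℝ) ^ 2 * Stot := by
    have hK2 : (0 : ℝ) < (K : ℝ) ^ 2 := by positivity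
    have h := (div_le_iff₀ hK2).mp (le_trans hcube hsum3)
    linarith
  have hA3' : A ^ 3 ≤ 3 * M * (K : ℝ) ^ 3 * Stot := by
    have hKK : (0 : ℝ) ≤ (K : ℝ) ^ 3 - (K : ℝ) ^ 2 := by nlinarith
    nlinarith [mul_nonneg (mul_nonneg hM.le hS0pre) hKK]
  -- abs simplification
  have habs : ∑ i : Fin K, |Q (t - 1) i| = A := by
    rw [hA]
    exact Finset.sum_congr rfl fun i _ => abs_of_nonneg (hnonneg _ i)
  rw [habs]
  clear_value A Stot
  -- real-power setup
  set T := (t : ℝ) with hT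
  have hT1 : (1 : ℝ) ≤ T := by rw [hT]; exact_mod_cast ht
  have hT0 : (0 : ℝ) ≤ T := by linarith
  clear_value T
  set qv := T ^ ((1 : ℝ) / 4) with hqv
  clear_value qv
  have hqv1 : (1 : ℝ) ≤ qv := by
    rw [hqv]
    have h := Real.rpow_le_rpow_of_exponent_le hT1 (show (0:ℝ) ≤ 1/4 by norm_num)
    rwa [Real.rpow_zero] at h
  have hqv0 : (0 : ℝ) < qv := lt_of_lt_of_le one_pos hqv1
  have hq6 : qv ^ 6 = T ^ ((3 : ℝ) / 2) := by
    rw [hqv, ← Real.rpow_natCast (T ^ ((1:ℝ)/4)) 6, ← Real.rpow_mul hT0]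
    norm_num
  -- main algebraic inequality
  have hpoly : 4 * A ^ 2 * qv ^ 2 ≤ 86 * M ^ 2 * (K : ℝ) ^ 6 * qv ^ 6 + Stot := by
    have h3 : (0 : ℝ) < 3 * M * (K : ℝ) ^ 3 := by positivity
    obtain ⟨c, hcdef⟩ : ∃ c, c = M * (K:ℝ)^3 * qv^2 := ⟨_, rfl⟩
    have hc : (0 : ℝ) < c := by rw [hcdef]; positivity
    have hkey2 : 12 * A ^ 2 * c ≤ 258 * c ^ 3 + A ^ 3 := by
      nlinarith [mul_nonneg (sq_nonneg (A - 8 * c)) (by linarith : (0:ℝ) ≤ A + 4 * c),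
        pow_pos hc 3]
    have hs : 3 * M * (K:ℝ)^3 * (4 * A ^ 2 * qv ^ 2) ≤
        3 * M * (K:ℝ)^3 * (86 * M ^ 2 * (K : ℝ) ^ 6 * qv ^ 6 + Stot) := by
      have e1 : 3 * M * (K:ℝ)^3 * (4 * A ^ 2 * qv ^ 2) = 12 * A ^ 2 * c := by
        rw [hcdef]; ring
      have e2 : 3 * M * (K:ℝ)^3 * (86 * M ^ 2 * (K : ℝ) ^ 6 * qv ^ 6 + Stot)
          = 258 * c ^ 3 + 3 * M * (K:ℝ)^3 * Stot := by
        rw [hcdef]; ring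
      rw [e1, e2]
      linarith [hkey2, hA3']
    exact le_of_mul_le_mul_left hs h3
  -- square-root step
  have hS0 : (0 : ℝ) ≤ 86 * M ^ 2 * (K : ℝ) ^ 6 * qv ^ 6 + Stot :=
    add_nonneg (by positivity) hS0pre
  have hsqrt : 2 * A * qv ≤
      Real.sqrt (86 * M ^ 2 * (K : ℝ) ^ 6 * T ^ ((3:ℝ)/2) + Stot) := by
    rw [← hq6]
    rw [Real.le_sqrt (mul_nonneg (by linarith : (0:ℝ) ≤ 2 * A) hqv0.le) hS0]
    have e : (2 * A * qv) ^ 2 = 4 * A ^ 2 * qv ^ 2 := by ring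
    rw [e]
    exact hpoly
  have h2A : 2 * A ≤ qv⁻¹ *
      Real.sqrt (86 * M ^ 2 * (K : ℝ) ^ 6 * T ^ ((3:ℝ)/2) + Stot) := by
    have h := mul_le_mul_of_nonneg_left hsqrt (inv_nonneg.mpr hqv0.le)
    have hne : qv ≠ 0 := ne_of_gt hqv0
    have e : qv⁻¹ * (2 * A * qv) = 2 * A := by field_simp
    rwa [e] at h
  have hexp : qv⁻¹ ≤ T ^ (-(1 / 4 - δ / 2) : ℝ) := by
    have e : qv⁻¹ = T ^ (-(1/4 : ℝ)) := by
      rw [hqv, ← Real.rpow_neg hT0]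
    rw [e]
    exact Real.rpow_le_rpow_of_exponent_le hT1 (by linarith)
  calc 2 * A ≤ qv⁻¹ * Real.sqrt (86 * M ^ 2 * (K : ℝ) ^ 6 * T ^ ((3:ℝ)/2) + Stot) := h2A
    _ ≤ T ^ (-(1 / 4 - δ / 2) : ℝ) *
        Real.sqrt (86 * M ^ 2 * (K : ℝ) ^ 6 * T ^ ((3:ℝ)/2) + Stot) :=
      mul_le_mul_of_nonneg_right hexp (Real.sqrt_nonneg _)
end

section
/- Let K ≥ 1, M > 0, T₀ ≥ 0, and let (Q_t)_{t ≥ T₀} be vectors in ℝ_{≥0}^K with |Q_{t,i} − Q_{t−1,i}| ≤ M for all t > T₀ and all i. Suppose ‖Q_{T₀}‖_∞ ≥ 4M, and set T = ⌈‖Q_{T₀}‖_∞/(2M)⌉. Then: (i) (1/4)·M·T ≤ ‖Q_{T₀+t−1}‖_∞ ≤ 4·M·T for every 1 ≤ t ≤ T; (ii) (1/16)·M²·T³ ≤ Σ_{t=T₀+1}^{T₀+T} ‖Q_{t−1}‖₂² ≤ 16·K·M²·T³; (iii) (1/4)·M·T² ≤ Σ_{t=T₀+1}^{T₀+T} ‖Q_{t−1}‖₁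 ≤ 4·K·M·T². -/
set_option maxHeartbeats 1000000


/-- window bounds for the sup norm, the sum of squared `ℓ₂` norms, and the
sum of `ℓ₁` norms of the queue vectors over an SSMW epoch of length
`T = ⌈‖Q_{T₀}‖_∞/(2M)⌉`.  Here `‖·‖` is the sup norm on `Fin K → ℝ`. -/
theorem queue_window_l1_l2_bounds (K : ℕ) (hK : 1 ≤ K) (M : ℝ) (hM : 0 < M)
    (T₀ : ℕ) (Q : ℕ → Fin K → ℝ)
    (hnonneg : ∀ t i, T₀ ≤ t → 0 ≤ Q t i)
    (hinc : ∀ t : ℕ, T₀ < t → ∀ i, |Q t i - Q (t - 1) i| ≤ M)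
    (hbig : 4 * M ≤ ‖Q T₀‖)
    (T : ℕ) (hT : T = ⌈‖Q T₀‖ / (2 * M)⌉₊) :
    (∀ t : ℕ, 1 ≤ t → t ≤ T →
        (1 / 4) * M * (T : ℝ) ≤ ‖Q (T₀ + t - 1)‖ ∧
        ‖Q (T₀ + t - 1)‖ ≤ 4 * M * (T : ℝ)) ∧
    ((1 / 16) * M ^ 2 * (T : ℝ) ^ 3 ≤
        ∑ t ∈ Finset.Icc (T₀ + 1) (T₀ + T), ∑ i, (Q (t - 1) i) ^ 2 ∧
      ∑ t ∈ Finset.Icc (T₀ + 1) (T₀ + T), ∑ i, (Q (t - 1) i) ^ 2 ≤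
        16 * (K : ℝ) * M ^ 2 * (T : ℝ) ^ 3) ∧
    ((1 / 4) * M * (T : ℝ) ^ 2 ≤
        ∑ t ∈ Finset.Icc (T₀ + 1) (T₀ + T), ∑ i, |Q (t - 1) i| ∧
      ∑ t ∈ Finset.Icc (T₀ + 1) (T₀ + T), ∑ i, |Q (t - 1) i| ≤
        4 * (K : ℝ) * M * (T : ℝ) ^ 2) := by
  have hKpos : (0:ℝ) < K := by exact_mod_cast Nat.pos_of_ne_zero (by omega)
  set N := ‖Q T₀‖ with hN
  have hNpos : 0 < N := lt_of_lt_of_le (by linarith) hbig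
  -- max index
  have hmax : ∀ f : Fin K → ℝ, ∃ i : Fin K, ‖f‖ ≤ |f i| := by
    intro f
    obtain ⟨i, -, hi⟩ := Finset.exists_max_image Finset.univ (fun i => |f i|)
      ⟨⟨0, hK⟩, Finset.mem_univ _⟩
    refine ⟨i, (pi_norm_le_iff_of_nonneg (abs_nonneg _)).2 fun j => ?_⟩
    simpa [Real.norm_eq_abs] using hi j (Finset.mem_univ _)
  have hle : ∀ f : Fin K → ℝ, ∀ i, |f i| ≤ ‖f‖ := by
    intro f i
    simpa [Real.norm_eq_abs] using norm_le_pi_norm f i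
  have hstep : ∀ n : ℕ, N - n * M ≤ ‖Q (T₀ + n)‖ ∧ ‖Q (T₀ + n)‖ ≤ N + n * M := by
    intro n
    induction n with
    | zero => simp [hN]
    | succ n ih =>
      have hd : ‖Q (T₀ + (n+1)) - Q (T₀ + n)‖ ≤ M := by
        rw [pi_norm_le_iff_of_nonneg hM.le]
        intro i
        have h := hinc (T₀ + (n+1)) (by omega) i
        rw [show T₀ + (n+1) - 1 = T₀ + n from by omega] at h
        simpa [Real.norm_eq_abs] using h
      have habs := abs_norm_sub_norm_le (Q (T₀ + (n+1))) (Q (T₀ + n))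
      rw [abs_le] at habs
      obtain ⟨h1, h2⟩ := habs
      push_cast
      constructor <;> nlinarith [ih.1, ih.2]
  -- bounds on T
  have h2M : (0:ℝ) < 2 * M := by linarith
  have hT1 : N ≤ 2 * M * T := by
    have := Nat.le_ceil (N / (2 * M))
    rw [← hT] at this
    rw [div_le_iff₀ h2M] at this
    linarith
  have hT2 : M * T < (3/4) * N := by
    have h1 : (T:ℝ) < N / (2 * M) + 1 := by
      rw [hT]
      exact Nat.ceil_lt_add_one (by positivity)
    have h2 : N / (2 * M) = N / (2 * M) := rfl
    have h3 : (1:ℝ) ≤ N / (4 * M) := by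
      rw [le_div_iff₀ (by linarith)]; linarith
    have h4 : N / (2 * M) * (2 * M) = N := by field_simp
    have h5 : N / (4 * M) * (4 * M) = N := by field_simp
    nlinarith
  have hTpos : (0:ℝ) < T := by nlinarith
  -- part (i)
  have parti : ∀ t : ℕ, 1 ≤ t → t ≤ T →
      (1 / 4) * M * (T : ℝ) ≤ ‖Q (T₀ + t - 1)‖ ∧
      ‖Q (T₀ + t - 1)‖ ≤ 4 * M * (T : ℝ) := by
    intro t ht1 ht2
    have he : T₀ + t - 1 = T₀ + (t - 1) := by omega
    rw [he]
    obtain ⟨hl, hu⟩ := hstep (t - 1)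
    have hc : ((t - 1 : ℕ) : ℝ) ≤ (T:ℝ) - 1 := by
      have : ((t - 1 : ℕ) : ℝ) = (t:ℝ) - 1 := by
        push_cast [Nat.cast_sub ht1]; ring
      rw [this]
      have : (t:ℝ) ≤ T := by exact_mod_cast ht2
      linarith
    have hc0 : (0:ℝ) ≤ ((t - 1 : ℕ) : ℝ) := Nat.cast_nonneg _
    constructor
    · nlinarith
    · nlinarith
  refine ⟨parti, ?_, ?_⟩
  · -- ℓ₂ sums
    have hcard : (Finset.Icc (T₀ + 1) (T₀ + T)).card = T := by
      rw [Nat.card_Icc]; omega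
    have hterm : ∀ t ∈ Finset.Icc (T₀ + 1) (T₀ + T),
        (1/16) * M^2 * (T:ℝ)^2 ≤ ∑ i, (Q (t - 1) i) ^ 2 ∧
        ∑ i, (Q (t - 1) i) ^ 2 ≤ 16 * (K:ℝ) * M^2 * (T:ℝ)^2 := by
      intro t htm
      rw [Finset.mem_Icc] at htm
      have he : t - 1 = T₀ + (t - T₀) - 1 := by omega
      obtain ⟨hl, hu⟩ := parti (t - T₀) (by omega) (by omega)
      rw [← he] at hl hu
      constructor
      · obtain ⟨i, hi⟩ := hmax (Q (t - 1))
        have h1 : ‖Q (t-1)‖^2 ≤ (Q (t-1) i)^2 := by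
          have h := pow_le_pow_left₀ (norm_nonneg _) hi 2
          rwa [sq_abs] at h
        have h2 : (Q (t-1) i)^2 ≤ ∑ j, (Q (t-1) j)^2 :=
          Finset.single_le_sum (f := fun j => (Q (t-1) j)^2)
            (fun j _ => sq_nonneg _) (Finset.mem_univ i)
        nlinarith
      · have h1 : ∑ i, (Q (t-1) i)^2 ≤ ∑ _i : Fin K, ‖Q (t-1)‖^2 := by
          apply Finset.sum_le_sum
          intro i _
          rw [← sq_abs]
          exact pow_le_pow_left₀ (abs_nonneg _) (hle _ i) 2
        rw [Finset.sum_const, Finset.card_univ, Fintype.card_fin, nsmul_eq_mul] at h1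
        have hsq : ‖Q (t-1)‖^2 ≤ 16 * M^2 * (T:ℝ)^2 := by
          nlinarith [norm_nonneg (Q (t-1))]
        have := mul_le_mul_of_nonneg_left hsq hKpos.le
        nlinarith
    constructor
    · have := Finset.card_nsmul_le_sum (Finset.Icc (T₀ + 1) (T₀ + T))
        (fun t => ∑ i, (Q (t - 1) i) ^ 2) ((1/16) * M^2 * (T:ℝ)^2)
        (fun t ht => (hterm t ht).1)
      rw [hcard, nsmul_eq_mul] at this
      calc (1/16) * M^2 * (T:ℝ)^3 = (T:ℝ) * ((1/16) * M^2 * (T:ℝ)^2) := by ring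
        _ ≤ _ := this
    · have := Finset.sum_le_card_nsmul (Finset.Icc (T₀ + 1) (T₀ + T))
        (fun t => ∑ i, (Q (t - 1) i) ^ 2) (16 * (K:ℝ) * M^2 * (T:ℝ)^2)
        (fun t ht => (hterm t ht).2)
      rw [hcard, nsmul_eq_mul] at this
      calc _ ≤ (T:ℝ) * (16 * (K:ℝ) * M^2 * (T:ℝ)^2) := this
        _ = 16 * (K:ℝ) * M^2 * (T:ℝ)^3 := by ring
  · -- ℓ₁ sums
    have hcard : (Finset.Icc (T₀ + 1) (T₀ + T)).card = T := by
      rw [Nat.card_Icc]; omega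
    have hterm : ∀ t ∈ Finset.Icc (T₀ + 1) (T₀ + T),
        (1/4) * M * (T:ℝ) ≤ ∑ i, |Q (t - 1) i| ∧
        ∑ i, |Q (t - 1) i| ≤ 4 * (K:ℝ) * M * (T:ℝ) := by
      intro t htm
      rw [Finset.mem_Icc] at htm
      have he : t - 1 = T₀ + (t - T₀) - 1 := by omega
      obtain ⟨hl, hu⟩ := parti (t - T₀) (by omega) (by omega)
      rw [← he] at hl hu
      constructor
      · obtain ⟨i, hi⟩ := hmax (Q (t - 1))
        have h2 : |Q (t-1) i| ≤ ∑ j, |Q (t-1) j| :=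
          Finset.single_le_sum (f := fun j => |Q (t-1) j|)
            (fun j _ => abs_nonneg _) (Finset.mem_univ i)
        linarith
      · have h1 : ∑ i, |Q (t-1) i| ≤ ∑ _i : Fin K, ‖Q (t-1)‖ :=
          Finset.sum_le_sum (fun i _ => hle _ i)
        rw [Finset.sum_const, Finset.card_univ, Fintype.card_fin, nsmul_eq_mul] at h1
        have := mul_le_mul_of_nonneg_left hu hKpos.le
        nlinarith
    constructor
    · have := Finset.card_nsmul_le_sum (Finset.Icc (T₀ + 1) (T₀ + T))
        (fun t => ∑ i, |Q (t - 1) i|) ((1/4) * M * (T:ℝ))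
        (fun t ht => (hterm t ht).1)
      rw [hcard, nsmul_eq_mul] at this
      calc (1/4) * M * (T:ℝ)^2 = (T:ℝ) * ((1/4) * M * (T:ℝ)) := by ring
        _ ≤ _ := this
    · have := Finset.sum_le_card_nsmul (Finset.Icc (T₀ + 1) (T₀ + T))
        (fun t => ∑ i, |Q (t - 1) i|) (4 * (K:ℝ) * M * (T:ℝ))
        (fun t ht => (hterm t ht).2)
      rw [hcard, nsmul_eq_mul] at this
      calc _ ≤ (T:ℝ) * (4 * (K:ℝ) * M * (T:ℝ)) := this
        _ = 4 * (K:ℝ) * M * (T:ℝ)^2 := by ring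
end

section
/- Let K ≥ 1, η > 0, let x ∈ Δ^{[K]}, let p ∈ Δ^{[K]} have strictly positive entries, and let g ∈ ℝ_{≥0}^K. Assume η·gᵢ ≤ pᵢ and xᵢ ≤ 2·pᵢ for every i. Then Σ_{i=1}^K pᵢ·η^{−1}·xᵢ·(exp(η·gᵢ/pᵢ) − 1 − η·gᵢ/pᵢ) ≤ e·η·Σ_{i=1}^K gᵢ². (The left-hand side is the conditional expectation, over an action a drawn from p, of the one-step mirror-descent cost η^{−1}·D_Ψ(x, z̃), where z̃ agrees with x except that its a-th coordinate is x_a·exp(η·g_a/p_a).) -/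
lemma exp_quad_bound {t : ℝ} (h0 : 0 ≤ t) (h1 : t ≤ 1) :
    Real.exp t - 1 - t ≤ (3/4) * t ^ 2 := by
  have h := Real.exp_bound' h0 h1 (n := 2) (by norm_num)
  simp [Finset.sum_range_succ, Nat.factorial] at h
  nlinarith [h]

/-- expected one-step mirror-descent cost bound: if `η·gᵢ ≤ pᵢ` and
`xᵢ ≤ 2pᵢ` for all `i`, then
`Σᵢ pᵢ·η⁻¹·xᵢ·(exp(η gᵢ/pᵢ) − 1 − η gᵢ/pᵢ) ≤ e·η·Σᵢ gᵢ²`. -/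
theorem expected_omd_cost_le (K : ℕ) (hK : 1 ≤ K) (η : ℝ) (hη : 0 < η)
    (x p g : Fin K → ℝ)
    (hxnn : ∀ i, 0 ≤ x i) (hxsum : ∑ i, x i = 1)
    (hppos : ∀ i, 0 < p i) (hpsum : ∑ i, p i = 1)
    (hg : ∀ i, 0 ≤ g i)
    (h1 : ∀ i, η * g i ≤ p i)
    (h2 : ∀ i, x i ≤ 2 * p i) :
    ∑ i, p i * η⁻¹ * (x i * (Real.exp (η * g i / p i) - 1 - η * g i / p i)) ≤
      Real.exp 1 * η * ∑ i, (g i) ^ 2 := by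
  rw [Finset.mul_sum]
  apply Finset.sum_le_sum
  intro i _
  set t := η * g i / p i with ht
  have hp := hppos i
  have ht0 : 0 ≤ t := div_nonneg (mul_nonneg hη.le (hg i)) hp.le
  have ht1 : t ≤ 1 := (div_le_one hp).2 (h1 i)
  have hb := exp_quad_bound ht0 ht1
  have hd : Real.exp t - 1 - t ≥ 0 := by
    nlinarith [Real.add_one_le_exp t]
  have key : p i * η⁻¹ * (x i * (Real.exp t - 1 - t))
      ≤ p i * η⁻¹ * (2 * p i * ((3/4) * t ^ 2)) := by
    apply mul_le_mul_of_nonneg_left _ (by positivity)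
    exact mul_le_mul (h2 i) hb hd (by positivity)
  refine key.trans ?_
  have : p i * η⁻¹ * (2 * p i * ((3/4) * t ^ 2)) = (3/2) * η * g i ^ 2 := by
    rw [ht]
    field_simp
    ring
  rw [this]
  have he : (3/2 : ℝ) ≤ Real.exp 1 := by
    nlinarith [Real.add_one_le_exp (1:ℝ)]
  nlinarith [mul_nonneg (sub_nonneg.2 he) (mul_nonneg hη.le (sq_nonneg (g i)))]
end

section
/- Let K ≥ 1, M > 0, let q, a ∈ ℝ_{≥0}^K with aᵢ ≤ M for all i, let j ∈ {1,…,K}, and let s ∈ [0, M]. Define q' ∈ ℝ_{≥0}^K by q'ᵢ = max{qᵢ + aᵢ − s·1[i = j], 0}. Then (1/2)·‖q'‖₂² − (1/2)·‖q‖₂² ≤ (K+1)·M²/2 + ⟨q, a⟩ − q_j·s. -/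
/-- one-step quadratic Lyapunov drift bound for a single-server `K`-queue
system: `(1/2)‖q'‖₂² − (1/2)‖q‖₂² ≤ (K+1)M²/2 + ⟨q, a⟩ − q_j·s`. -/
theorem one_step_quadratic_drift (K : ℕ) (hK : 1 ≤ K) (M : ℝ) (hM : 0 < M)
    (q a : Fin K → ℝ) (j : Fin K) (s : ℝ)
    (hq : ∀ i, 0 ≤ q i)
    (hann : ∀ i, 0 ≤ a i) (haM : ∀ i, a i ≤ M)
    (hs0 : 0 ≤ s) (hsM : s ≤ M)
    (q' : Fin K → ℝ)
    (hq' : ∀ i, q' i = max (q i + a i - (if i = j then s else 0)) 0) :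
    (1 / 2) * (∑ i, (q' i) ^ 2) - (1 / 2) * (∑ i, (q i) ^ 2) ≤
      ((K : ℝ) + 1) * M ^ 2 / 2 + (∑ i, q i * a i) - q j * s := by
  have key : ∀ i, (q' i) ^ 2 ≤
      q i ^ 2 + 2 * (q i * a i) - 2 * (if i = j then q j * s else 0) + M ^ 2 := by
    intro i
    have ht : (if i = j then s else 0) ≤ M := by split <;> linarith
    have ht0 : 0 ≤ (if i = j then s else 0) := by split <;> linarith
    set t := (if i = j then s else 0) with htdef
    have hsq : (q' i) ^ 2 ≤ (q i + a i - t) ^ 2 := by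
      rw [hq' i]
      rcases le_or_gt 0 (q i + a i - t) with h | h
      · rw [max_eq_left h]
      · rw [max_eq_right h.le]; nlinarith [sq_nonneg (q i + a i - t)]
    have hcross : q i * t = (if i = j then q j * s else 0) := by
      rw [htdef]; split
      · rename_i h; rw [h]
      · ring
    have hab : (a i - t) ^ 2 ≤ M ^ 2 := by
      have := hann i; have := haM i
      nlinarith
    nlinarith [hsq, hab, hcross]
  have hsum : (∑ i, (q' i) ^ 2) ≤
      ∑ i, (q i ^ 2 + 2 * (q i * a i) - 2 * (if i = j then q j * s else 0) + M ^ 2) :=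
    Finset.sum_le_sum fun i _ => key i
  have hite : (∑ i, (if i = j then q j * s else 0)) = q j * s := by
    simp [Finset.sum_ite_eq']
  have hexp : (∑ i, (q i ^ 2 + 2 * (q i * a i) - 2 * (if i = j then q j * s else 0) + M ^ 2))
      = (∑ i, q i ^ 2) + 2 * (∑ i, q i * a i) - 2 * (q j * s) + K * M ^ 2 := by
    rw [Finset.sum_add_distrib, Finset.sum_sub_distrib, Finset.sum_add_distrib,
      ← Finset.mul_sum, ← Finset.mul_sum, hite]
    simp [Finset.card_univ]
  have hM2 : (0:ℝ) < M ^ 2 := by positivity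
  rw [hexp] at hsum
  linarith
end

section
/- Let K ≥ 1, M > 0, ε > 0, let T₀ ≥ 0 and w ≥ 1 be integers, and set W = {T₀+1, …, T₀+w}. Let (Q_t)_{t ≥ T₀} be vectors in ℝ_{≥0}^K with |Q_{t,i} − Q_{t−1,i}| ≤ M for all t > T₀ and all i. For each t ∈ W let θ_t ∈ Δ^{[K]} and σ_t, λ_t ∈ [0, M]^K, and assume that for every coordinate j: (1/w)·Σ_{t∈W} θ_{t,j}·σ_{t,j} ≥ ε + (1/w)·Σ_{t∈W} λ_{t,j}. Then Σ_{t∈W} ⟨Q_{t−1}, θ_t ⊙ σ_t − λ_t⟩ ≥ ε·Σ_{t∈W} ‖Q_{t−1}‖₁ − (K·M² + ε·K·M)·(w − 1)². -/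
/-!
Freeze the queue at the start of the window. Each coordinate of `Q_{t-1}` stays within
`M (t - 1 - T₀)` of `Q_{T₀}`, and each coordinate of `θ_t ⊙ σ_t - λ_t` lies in `[-M, M]`, so
replacing `Q_{t-1}` by `Q_{T₀}` costs at most `K M² ∑_{n<w} n` in the drift and `K M ∑_{n<w} n`
in the `ℓ¹` norm, where `∑_{n<w} n ≤ (w - 1)²`. For the frozen queue the advantage hypothesis
gives `⟨Q_{T₀}, ∑_t (θ_t ⊙ σ_t - λ_t)⟩ ≥ ε w ‖Q_{T₀}‖₁`.
-/

open Finset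

theorem sum_range_natCast_le_sq (w : ℕ) : ∑ n ∈ range w, (n : ℝ) ≤ ((w : ℝ) - 1) ^ 2 := by
  rcases w with _ | m
  · simp
  · rw [sum_range_succ']
    push_cast
    calc ∑ n ∈ range m, ((n : ℝ) + 1) + 0 ≤ ∑ _n ∈ range m, (m : ℝ) := by
          rw [add_zero]
          exact sum_le_sum fun n hn => by exact_mod_cast mem_range.mp hn
      _ = ((m : ℝ) + 1 - 1) ^ 2 := by simp [sq]

theorem abs_sub_zero_le_mul_of_abs_sub_succ_le {f : ℕ → ℝ} {M : ℝ}
    (hf : ∀ k, |f (k + 1) - f k| ≤ M) (n : ℕ) : |f n - f 0| ≤ M * n := by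
  have := dist_le_range_sum_of_dist_le (f := f) n (d := fun _ => M)
    fun {k} _ => by rw [Real.dist_eq, abs_sub_comm]; exact hf k
  rwa [Real.dist_eq, abs_sub_comm, sum_const, card_range, nsmul_eq_mul, mul_comm] at this

theorem sub_mul_le_mul_of_abs_sub_le {a b x d M : ℝ} (hab : |a - b| ≤ d) (hx : |x| ≤ M) :
    b * x - d * M ≤ a * x := by
  have hprod : |(a - b) * x| ≤ d * M := by
    rw [abs_mul]; exact mul_le_mul hab hx (abs_nonneg x) ((abs_nonneg _).trans hab)
  linarith [neg_abs_le ((a - b) * x)]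

theorem abs_mul_sub_le {θ s l M : ℝ} (hθ₀ : 0 ≤ θ) (hθ₁ : θ ≤ 1) (hs₀ : 0 ≤ s) (hsM : s ≤ M)
    (hl₀ : 0 ≤ l) (hlM : l ≤ M) : |θ * s - l| ≤ M := by
  rw [abs_le]; constructor <;> nlinarith

theorem sum_Icc_add_one_eq_sum_range {β : Type*} [AddCommMonoid β] (f : ℕ → β) (a w : ℕ) :
    ∑ t ∈ Icc (a + 1) (a + w), f t = ∑ n ∈ range w, f (a + n + 1) := by
  rw [← Ico_add_one_right_eq_Icc, sum_Ico_eq_sum_range, show a + w + 1 - (a + 1) = w by omega]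
  exact sum_congr rfl fun n _ => by rw [add_right_comm]

section Window

variable {ι : Type*} [Fintype ι] {M ε : ℝ} {w : ℕ} {P X : ℕ → ι → ℝ}

theorem sum_sum_mul_ge_of_drift (hP : ∀ n i, |P n i - P 0 i| ≤ M * n)
    (hX : ∀ n < w, ∀ i, |X n i| ≤ M) (hP₀ : ∀ i, 0 ≤ P 0 i)
    (hadv : ∀ i, ε * w ≤ ∑ n ∈ range w, X n i) :
    ε * w * ∑ i, P 0 i - Fintype.card ι * M ^ 2 * ∑ n ∈ range w, (n : ℝ) ≤
      ∑ n ∈ range w, ∑ i, P n i * X n i := by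
  have hfrozen : ε * w * ∑ i, P 0 i ≤ ∑ i, P 0 i * ∑ n ∈ range w, X n i := by
    rw [mul_sum]
    exact sum_le_sum fun i _ => by rw [mul_comm]; exact mul_le_mul_of_nonneg_left (hadv i) (hP₀ i)
  calc ε * w * ∑ i, P 0 i - Fintype.card ι * M ^ 2 * ∑ n ∈ range w, (n : ℝ)
      ≤ ∑ n ∈ range w, ∑ i, (P 0 i * X n i - M * n * M) := by
        rw [sum_comm]
        simp only [sum_sub_distrib, sum_const, card_univ, nsmul_eq_mul, ← mul_sum]
        have hconst : (Fintype.card ι : ℝ) * ∑ n ∈ range w, M * n * M =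
            Fintype.card ι * M ^ 2 * ∑ n ∈ range w, (n : ℝ) := by
          rw [mul_sum, mul_sum]; exact sum_congr rfl fun n _ => by ring
        linarith
    _ ≤ ∑ n ∈ range w, ∑ i, P n i * X n i :=
        sum_le_sum fun n hn => sum_le_sum fun i _ =>
          sub_mul_le_mul_of_abs_sub_le (hP n i) (hX n (mem_range.mp hn) i)

theorem sum_sum_abs_le_of_drift (hP : ∀ n i, |P n i - P 0 i| ≤ M * n) (hP₀ : ∀ i, 0 ≤ P 0 i) :
    ∑ n ∈ range w, ∑ i, |P n i| ≤
      w * ∑ i, P 0 i + Fintype.card ι * M * ∑ n ∈ range w, (n : ℝ) := by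
  calc ∑ n ∈ range w, ∑ i, |P n i| ≤ ∑ n ∈ range w, ∑ i, (P 0 i + M * n) :=
        sum_le_sum fun n _ => sum_le_sum fun i _ => by
          linarith [abs_sub_abs_le_abs_sub (P n i) (P 0 i), hP n i, abs_of_nonneg (hP₀ i)]
    _ = w * ∑ i, P 0 i + Fintype.card ι * M * ∑ n ∈ range w, (n : ℝ) := by
        simp only [sum_add_distrib, sum_const, card_univ, card_range, nsmul_eq_mul, mul_sum]
        exact congrArg _ (sum_congr rfl fun n _ => by ring)

theorem window_drift_of_bounded_increments (hM : 0 ≤ M) (hε : 0 ≤ ε)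
    (hP : ∀ n i, |P (n + 1) i - P n i| ≤ M) (hX : ∀ n < w, ∀ i, |X n i| ≤ M)
    (hP₀ : ∀ i, 0 ≤ P 0 i) (hadv : ∀ i, ε * w ≤ ∑ n ∈ range w, X n i) :
    ε * ∑ n ∈ range w, ∑ i, |P n i| -
        (Fintype.card ι * M ^ 2 + ε * Fintype.card ι * M) * ((w : ℝ) - 1) ^ 2 ≤
      ∑ n ∈ range w, ∑ i, P n i * X n i := by
  have hdrift : ∀ n i, |P n i - P 0 i| ≤ M * n := fun n i =>
    abs_sub_zero_le_mul_of_abs_sub_succ_le (f := fun k => P k i) (fun k => hP k i) n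
  have hlow := sum_sum_mul_ge_of_drift hdrift hX hP₀ hadv
  have hup := mul_le_mul_of_nonneg_left (sum_sum_abs_le_of_drift (w := w) hdrift hP₀) hε
  have hS := sum_range_natCast_le_sq w
  linarith [mul_le_mul_of_nonneg_left hS (by positivity : (0 : ℝ) ≤ Fintype.card ι * M ^ 2),
    mul_le_mul_of_nonneg_left hS (by positivity : (0 : ℝ) ≤ ε * Fintype.card ι * M)]

end Window

theorem window_negative_drift_general (K : ℕ) (M ε : ℝ) (hM : 0 < M) (hε : 0 < ε)
    (T₀ w : ℕ) (hw : 1 ≤ w)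
    (Q θ σ lam : ℕ → Fin K → ℝ)
    (hQnn : ∀ t i, 0 ≤ Q t i)
    (hinc : ∀ t : ℕ, T₀ < t → ∀ i, |Q t i - Q (t - 1) i| ≤ M)
    (hθ : ∀ t ∈ Finset.Icc (T₀ + 1) (T₀ + w),
      (∀ i, 0 ≤ θ t i) ∧ ∑ i, θ t i = 1)
    (hσ : ∀ t ∈ Finset.Icc (T₀ + 1) (T₀ + w), ∀ i, 0 ≤ σ t i ∧ σ t i ≤ M)
    (hlam : ∀ t ∈ Finset.Icc (T₀ + 1) (T₀ + w), ∀ i, 0 ≤ lam t i ∧ lam t i ≤ M)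
    (hadv : ∀ j : Fin K,
      ε + (1 / (w : ℝ)) * ∑ t ∈ Finset.Icc (T₀ + 1) (T₀ + w), lam t j ≤
        (1 / (w : ℝ)) * ∑ t ∈ Finset.Icc (T₀ + 1) (T₀ + w), θ t j * σ t j) :
    ε * (∑ t ∈ Finset.Icc (T₀ + 1) (T₀ + w), ∑ i, |Q (t - 1) i|) -
        ((K : ℝ) * M ^ 2 + ε * (K : ℝ) * M) * ((w : ℝ) - 1) ^ 2 ≤
      ∑ t ∈ Finset.Icc (T₀ + 1) (T₀ + w),
        ∑ i, Q (t - 1) i * (θ t i * σ t i - lam t i) := by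
  have hwin : ∀ n < w, T₀ + n + 1 ∈ Icc (T₀ + 1) (T₀ + w) := fun n hn =>
    mem_Icc.mpr ⟨by omega, by omega⟩
  have hadv_range : ∀ j, ε * w ≤ ∑ n ∈ range w,
      (θ (T₀ + n + 1) j * σ (T₀ + n + 1) j - lam (T₀ + n + 1) j) := fun j => by
    have h := mul_le_mul_of_nonneg_left (hadv j) (Nat.cast_nonneg w)
    rw [mul_add, ← mul_assoc, ← mul_assoc, mul_one_div_cancel (by positivity), one_mul, one_mul,
      sum_Icc_add_one_eq_sum_range, sum_Icc_add_one_eq_sum_range] at h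
    rw [sum_sub_distrib]
    linarith
  have key := window_drift_of_bounded_increments (P := fun n i => Q (T₀ + n) i) hM.le hε.le
    (fun n i => by simpa [← add_assoc] using hinc (T₀ + n + 1) (by omega) i)
    (fun n hn i => have ht := hwin n hn
      abs_mul_sub_le ((hθ _ ht).1 i) (stdSimplex.le_one ⟨_, hθ _ ht⟩ i) (hσ _ ht i).1 (hσ _ ht i).2
        (hlam _ ht i).1 (hlam _ ht i).2)
    (fun i => hQnn T₀ i) hadv_range
  rw [Fintype.card_fin] at key
  simpa only [sum_Icc_add_one_eq_sum_range, Nat.add_sub_cancel] using key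

/-- the single-window negative-drift estimate under the piecewise
stabilizability assumption: if the reference randomized policy `θ` has an `ε` service
advantage over arrivals on the window `W = {T₀+1, …, T₀+w}`, then
`Σ_{t∈W} ⟨Q_{t−1}, θ_t ⊙ σ_t − λ_t⟩ ≥ ε·Σ_{t∈W} ‖Q_{t−1}‖₁ − (KM² + εKM)(w−1)²`. -/
theorem window_negative_drift (K : ℕ) (hK : 1 ≤ K) (M ε : ℝ) (hM : 0 < M) (hε : 0 < ε)
    (T₀ w : ℕ) (hw : 1 ≤ w)
    (Q θ σ lam : ℕ → Fin K → ℝ)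
    (hQnn : ∀ t i, 0 ≤ Q t i)
    (hinc : ∀ t : ℕ, T₀ < t → ∀ i, |Q t i - Q (t - 1) i| ≤ M)
    (hθ : ∀ t ∈ Finset.Icc (T₀ + 1) (T₀ + w),
      (∀ i, 0 ≤ θ t i) ∧ ∑ i, θ t i = 1)
    (hσ : ∀ t ∈ Finset.Icc (T₀ + 1) (T₀ + w), ∀ i, 0 ≤ σ t i ∧ σ t i ≤ M)
    (hlam : ∀ t ∈ Finset.Icc (T₀ + 1) (T₀ + w), ∀ i, 0 ≤ lam t i ∧ lam t i ≤ M)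
    (hadv : ∀ j : Fin K,
      ε + (1 / (w : ℝ)) * ∑ t ∈ Finset.Icc (T₀ + 1) (T₀ + w), lam t j ≤
        (1 / (w : ℝ)) * ∑ t ∈ Finset.Icc (T₀ + 1) (T₀ + w), θ t j * σ t j) :
    ε * (∑ t ∈ Finset.Icc (T₀ + 1) (T₀ + w), ∑ i, |Q (t - 1) i|) -
        ((K : ℝ) * M ^ 2 + ε * (K : ℝ) * M) * ((w : ℝ) - 1) ^ 2 ≤
      ∑ t ∈ Finset.Icc (T₀ + 1) (T₀ + w),
        ∑ i, Q (t - 1) i * (θ t i * σ t i - lam t i) :=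
  window_negative_drift_general K M ε hM hε T₀ w hw Q θ σ lam hQnn hinc hθ hσ hlam hadv
end

section
/- Let n ≥ 1 and let x_1, …, x_n be nonnegative real numbers. Then Σ_{i=1}^n x_i / √(1 + Σ_{j=1}^i x_j) ≤ 2·√(1 + Σ_{i=1}^n x_i). -/
lemma key_step (a t : ℝ) (ha : 1 ≤ a) (ht : 0 ≤ t) :
    t / Real.sqrt (a + t) ≤ 2 * Real.sqrt (a + t) - 2 * Real.sqrt a := by
  have ha0 : (0:ℝ) ≤ a := by linarith
  have hat : (0:ℝ) < a + t := by linarith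
  have hs : 0 < Real.sqrt (a + t) := Real.sqrt_pos.mpr hat
  have h1 : Real.sqrt (a + t) ^ 2 = a + t := Real.sq_sqrt (le_of_lt hat)
  have h2 : Real.sqrt a ^ 2 = a := Real.sq_sqrt ha0
  have h3 : 0 ≤ Real.sqrt a := Real.sqrt_nonneg a
  rw [div_le_iff₀ hs]
  nlinarith [sq_nonneg (Real.sqrt (a + t) - Real.sqrt a)]

lemma aux_sum (x : ℕ → ℝ) : ∀ n : ℕ, (∀ i ∈ Finset.Icc 1 n, 0 ≤ x i) →
    ∑ i ∈ Finset.Icc 1 n, x i / Real.sqrt (1 + ∑ j ∈ Finset.Icc 1 i, x j) ≤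
      2 * Real.sqrt (1 + ∑ i ∈ Finset.Icc 1 n, x i) - 2 := by
  intro n
  induction n with
  | zero =>
      intro _
      simp
  | succ n ih =>
      intro hx
      have hxn : ∀ i ∈ Finset.Icc 1 n, 0 ≤ x i := fun i hi => hx i
        (Finset.mem_Icc.mpr ⟨(Finset.mem_Icc.mp hi).1, (Finset.mem_Icc.mp hi).2.trans (Nat.le_succ n)⟩)
      have hsum : ∑ i ∈ Finset.Icc 1 (n + 1), x i = (∑ i ∈ Finset.Icc 1 n, x i) + x (n + 1) :=
        Finset.sum_Icc_succ_top (Nat.succ_le_succ (Nat.zero_le n)) x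
      have hfun : ∑ i ∈ Finset.Icc 1 (n + 1), x i / Real.sqrt (1 + ∑ j ∈ Finset.Icc 1 i, x j) =
          (∑ i ∈ Finset.Icc 1 n, x i / Real.sqrt (1 + ∑ j ∈ Finset.Icc 1 i, x j)) +
            x (n + 1) / Real.sqrt (1 + ∑ j ∈ Finset.Icc 1 (n + 1), x j) :=
        Finset.sum_Icc_succ_top (Nat.succ_le_succ (Nat.zero_le n)) _
      set a : ℝ := 1 + ∑ i ∈ Finset.Icc 1 n, x i with ha
      have ha1 : 1 ≤ a := by
        have : 0 ≤ ∑ i ∈ Finset.Icc 1 n, x i := Finset.sum_nonneg hxn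
        linarith
      have ht : 0 ≤ x (n + 1) := hx (n + 1) (Finset.mem_Icc.mpr ⟨Nat.succ_le_succ (Nat.zero_le n), le_rfl⟩)
      have hnew : 1 + ∑ i ∈ Finset.Icc 1 (n + 1), x i = a + x (n + 1) := by
        rw [hsum, ha]; ring
      have hkey := key_step a (x (n + 1)) ha1 ht
      have hih := ih hxn
      rw [hfun, hnew]
      rw [hnew] at *
      linarith

/-- for nonnegative reals `x_1, …, x_n`,
`Σᵢ xᵢ/√(1 + Σ_{j≤i} x_j) ≤ 2·√(1 + Σᵢ xᵢ)`. -/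
theorem sum_div_sqrt_partial_le (n : ℕ) (hn : 1 ≤ n) (x : ℕ → ℝ)
    (hx : ∀ i ∈ Finset.Icc 1 n, 0 ≤ x i) :
    ∑ i ∈ Finset.Icc 1 n, x i / Real.sqrt (1 + ∑ j ∈ Finset.Icc 1 i, x j) ≤
      2 * Real.sqrt (1 + ∑ i ∈ Finset.Icc 1 n, x i) := by
  have := aux_sum x n hx
  linarith
end

section
/- Let K ≥ 1 and 0 ≤ β < 1/K. Let x' ∈ ℝ^K satisfy 0 < x'_1 < x'_2 < … < x'_K. Then every minimizer y* of y ↦ D_Ψ(y, x') over the set {y ∈ ℝ^K : yᵢ ≥ β for all i, Σᵢ yᵢ = 1} satisfies y*_1 ≤ y*_2 ≤ … ≤ y*_K. (Equivalently: if y is a feasible point with yᵢ > y_j for some indices i < j, then swapping the i-th and j-th coordinates of y produces a feasible point with strictly smaller objective value.) -/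
/-! Swapping coordinates `i` and `j` of `y` leaves the entropy part `Σ (yₖ ln yₖ − yₖ)` of
`D_Ψ(y, x)` unchanged; only the cross term `−Σ yₖ ln xₖ` moves, and it drops by
`(yᵢ − yⱼ)(ln xⱼ − ln xᵢ)`. If `xᵢ < xⱼ` but `yᵢ > yⱼ` this is positive, so the swapped point,
which is still feasible, beats `y`: a minimizer has no such inversion. -/

lemma mul_log_div_eq_sub (t : ℝ) {c : ℝ} (hc : c ≠ 0) :
    t * Real.log (t / c) = t * Real.log t - t * Real.log c := by
  rcases eq_or_ne t 0 with rfl | ht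
  · simp
  · rw [Real.log_div ht hc, mul_sub]

lemma DPsi_sub_DPsi_comp_swap {K : ℕ} (y x : Fin K → ℝ) {i j : Fin K} (hij : i ≠ j)
    (hxi : x i ≠ 0) (hxj : x j ≠ 0) :
    DPsi y x - DPsi (y ∘ Equiv.swap i j) x
      = (y i - y j) * (Real.log (x j) - Real.log (x i)) := by
  unfold DPsi
  rw [← Finset.sum_sub_distrib, Fintype.sum_eq_add i j hij]
  · simp only [Function.comp_apply, Equiv.swap_apply_left, Equiv.swap_apply_right]
    rw [mul_log_div_eq_sub (y i) hxi, mul_log_div_eq_sub (y j) hxi,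
      mul_log_div_eq_sub (y i) hxj, mul_log_div_eq_sub (y j) hxj]
    ring
  · rintro k ⟨hki, hkj⟩
    simp [Equiv.swap_apply_of_ne_of_ne hki hkj]

lemma DPsi_comp_swap_lt {K : ℕ} {y x : Fin K → ℝ} {i j : Fin K} (hxi : 0 < x i)
    (hx : x i < x j) (hy : y j < y i) :
    DPsi (y ∘ Equiv.swap i j) x < DPsi y x := by
  have hij : i ≠ j := by rintro rfl; exact hx.false
  have hgain := DPsi_sub_DPsi_comp_swap y x hij hxi.ne' (hxi.trans hx).ne'
  have hpos : 0 < (y i - y j) * (Real.log (x j) - Real.log (x i)) :=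
    mul_pos (sub_pos.2 hy) (sub_pos.2 (Real.log_lt_log hxi hx))
  linarith

theorem bregman_projection_sorted_general (K : ℕ) (β : ℝ)
    (x' : Fin K → ℝ) (hx'pos : ∀ i, 0 < x' i) (hx'mono : StrictMono x')
    (ystar : Fin K → ℝ)
    (hmemβ : ∀ i, β ≤ ystar i) (hmemsum : ∑ i, ystar i = 1)
    (hmin : ∀ y : Fin K → ℝ, (∀ i, β ≤ y i) → ∑ i, y i = 1 →
      DPsi ystar x' ≤ DPsi y x') :
    Monotone ystar := by
  intro i j hle
  by_contra! hy
  have hlt : i < j := hle.lt_of_ne (by rintro rfl; exact hy.false)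
  have hswap_sum : ∑ k, (ystar ∘ Equiv.swap i j) k = 1 :=
    (Equiv.sum_comp (Equiv.swap i j) ystar).trans hmemsum
  have hle' := hmin _ (fun k => hmemβ _) hswap_sum
  exact (DPsi_comp_swap_lt (hx'pos i) (hx'mono hlt) hy).not_ge hle'

/-- if `x'` is strictly increasing with positive entries, every minimizer of
`y ↦ D_Ψ(y, x')` over the `β`-truncated simplex has nondecreasing coordinates. -/
theorem bregman_projection_sorted (K : ℕ) (hK : 1 ≤ K) (β : ℝ)
    (hβ0 : 0 ≤ β) (hβK : β < 1 / (K : ℝ))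
    (x' : Fin K → ℝ) (hx'pos : ∀ i, 0 < x' i) (hx'mono : StrictMono x')
    (ystar : Fin K → ℝ)
    (hmemβ : ∀ i, β ≤ ystar i) (hmemsum : ∑ i, ystar i = 1)
    (hmin : ∀ y : Fin K → ℝ, (∀ i, β ≤ y i) → ∑ i, y i = 1 →
      DPsi ystar x' ≤ DPsi y x') :
    Monotone ystar :=
  bregman_projection_sorted_general K β x' hx'pos hx'mono ystar hmemβ hmemsum hmin
end
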